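/- arXiv:2008.08943 — 3 statements merged into one kernel-verified Lean document; each statement's English description precedes it below -/
import Mathlib

section
/- Let 1 ≤ k ≤ n, l = n − k, and let p = (0 = p_0 < p_1 < ⋯ < p_k = n) with q_s = p_s − p_{s−1} for 1 ≤ s ≤ k. Then the map Ψ_p : S_{n−1}(p) → Shuff(q_1−1, …, q_k−1) × S_{q_1−1} × ⋯ × S_{q_k−1} is a bijection. -/
/-- `memS n l i` means `i ∈ S_{n,l}`: a sequence of length `l` with
`0 ≤ i_s ≤ n - s` for `1 ≤ s ≤ l` (here `i.getD t 0` is the entry `i_{t+1}`). -/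
def memS (n l : ℕ) (i : List ℕ) : Prop :=
  i.length = l ∧ ∀ t < l, i.getD t 0 + t + 1 ≤ n

/-- The ordered set remaining from `{0, …, n}` after performing the first `r`
removal steps prescribed by `i`: at each step the element at (0-indexed)
position `i_r + 1` of the remaining set is removed. -/
def restAfter (n : ℕ) (i : List ℕ) (r : ℕ) : List ℕ :=
  (i.take r).foldl (fun L a => L.eraseIdx (a + 1)) (List.range (n + 1))

/-- The ordered set remaining from `{0, …, n}` after the whole removal
procedure prescribed by `i`. -/
def restList (n : ℕ) (i : List ℕ) : List ℕ := restAfter n i i.length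

/-- The element `e_{r+1}` removed at (0-indexed) step `r` of the removal
procedure on `{0, …, n}` prescribed by `i`. -/
def elemRemoved (n : ℕ) (i : List ℕ) (r : ℕ) : ℕ :=
  (restAfter n i r).getD (i.getD r 0 + 1) 0

/-- The component `α_s` of `Ψ_p(i)`, for the interval `(a, b) = (p_{s-1}, p_s)`:
the set of (0-indexed) steps at which an element strictly between `a` and `b`
is removed. -/
def psiAlpha (n : ℕ) (i : List ℕ) (a b : ℕ) : Finset ℕ :=
  (Finset.range i.length).filter
    (fun r => a < elemRemoved n i r ∧ elemRemoved n i r < b)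

/-- The component `j_s` of `Ψ_p(i)`, for the interval `(a, b) = (p_{s-1}, p_s)`:
its `u`-th entry is `w - 1` where the `u`-th element of `(a, b)` to be removed
is, at the moment of its removal, the `w`-th smallest element of `(a, b)` still
present. -/
def psiJ (n : ℕ) (i : List ℕ) (a b : ℕ) : List ℕ :=
  ((List.range i.length).filter
      (fun r => decide (a < elemRemoved n i r ∧ elemRemoved n i r < b))).map
    (fun r => ((restAfter n i r).filter
      (fun y => decide (a < y ∧ y < elemRemoved n i r))).length)

/-- `α` is a `(q_0, …, q_{k-1})`-shuffle: an ordered partition of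
`{0, …, q_0 + ⋯ + q_{k-1} - 1}` with `|α_s| = q_s`. -/
def IsShuffleF {k : ℕ} (q : Fin k → ℕ) (α : Fin k → Finset ℕ) : Prop :=
  (∀ s, (α s).card = q s) ∧ (∀ s t, s ≠ t → Disjoint (α s) (α t)) ∧
    Finset.univ.biUnion α = Finset.range (∑ s, q s)

/-- The sign exponent `(α)` of a shuffle: the number of pairs `(a, b)` with
`a ∈ α_s`, `b ∈ α_t`, `s < t` and `a > b`. -/
def shuffleExpN (k : ℕ) (α : ℕ → Finset ℕ) : ℕ :=
  ∑ s ∈ Finset.range k, ∑ t ∈ Finset.range k,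
    if s < t then ∑ a ∈ α s, ((α t).filter (fun b => b < a)).card else 0


namespace SzczAux

open List

/-- remaining list after `r` removal steps with code `c` from list `L`. -/
def rest (L c : List ℕ) (r : ℕ) : List ℕ :=
  (c.take r).foldl (fun M a => M.eraseIdx a) L

def rem (L c : List ℕ) (r : ℕ) : ℕ := (rest L c r).getD (c.getD r 0) 0

def rems (L c : List ℕ) : List ℕ := (List.range c.length).map (rem L c)

def ValidCode (L c : List ℕ) : Prop := ∀ r < c.length, c.getD r 0 < L.length - r

def codeOf (L E : List ℕ) : List ℕ :=
  (List.range E.length).map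
    (fun r => (L.filter (fun y => decide (¬ y ∈ E.take r))).idxOf (E.getD r 0))

@[simp] lemma rest_zero (L c : List ℕ) : rest L c 0 = L := rfl

@[simp] lemma length_rems (L c : List ℕ) : (rems L c).length = c.length := by
  simp [rems]

@[simp] lemma length_codeOf (L E : List ℕ) : (codeOf L E).length = E.length := by
  simp [codeOf]

lemma rest_succ (L c : List ℕ) {r : ℕ} (h : r < c.length) :
    rest L c (r + 1) = (rest L c r).eraseIdx (c.getD r 0) := by
  unfold rest
  rw [List.take_succ, List.getElem?_eq_getElem h, List.foldl_append]
  simp [List.getD_eq_getElem, List.getElem?_eq_getElem h]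

lemma rest_sublist (L c : List ℕ) (r : ℕ) : rest L c r <+ L := by
  have H : ∀ (c' : List ℕ) (L : List ℕ),
      (c'.foldl (fun M a => M.eraseIdx a) L) <+ L := by
    intro c'
    induction c' with
    | nil => intro L; simp
    | cons a t ih =>
        intro L
        exact (ih (L.eraseIdx a)).trans (List.eraseIdx_sublist L a)
  exact H _ _

lemma length_rest (L c : List ℕ) (hv : ValidCode L c) :
    ∀ {r : ℕ}, r ≤ c.length → (rest L c r).length = L.length - r := by
  intro r
  induction r with
  | zero => simp
  | succ r ih =>
      intro hr
      have hrc : r < c.length := by omega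
      have hlen : (rest L c r).length = L.length - r := ih (by omega)
      have hidx : c.getD r 0 < (rest L c r).length := by
        rw [hlen]; exact hv r hrc
      rw [rest_succ L c hrc, List.length_eraseIdx_of_lt hidx, hlen]
      omega

lemma rem_eq_getElem (L c : List ℕ) (hv : ValidCode L c) {r : ℕ} (h : r < c.length) :
    ∃ hidx : c.getD r 0 < (rest L c r).length, rem L c r = (rest L c r)[c.getD r 0] := by
  have hidx : c.getD r 0 < (rest L c r).length := by
    rw [length_rest L c hv (le_of_lt h)]
    have := hv r h; omega
  exact ⟨hidx, by rw [rem, List.getD_eq_getElem _ _ hidx]⟩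

lemma rem_mem_rest (L c : List ℕ) (hv : ValidCode L c) {r : ℕ} (h : r < c.length) :
    rem L c r ∈ rest L c r := by
  obtain ⟨hidx, heq⟩ := rem_eq_getElem L c hv h
  rw [heq]; exact List.getElem_mem _

lemma rems_getD (L c : List ℕ) {r : ℕ} (h : r < c.length) :
    (rems L c).getD r 0 = rem L c r := by
  have h' : r < (rems L c).length := by simpa using h
  rw [List.getD_eq_getElem _ _ h']
  simp [rems]

lemma nodup_rest {L : List ℕ} (hL : L.Nodup) (c : List ℕ) (r : ℕ) : (rest L c r).Nodup :=
  (rest_sublist L c r).nodup hL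

lemma sorted_rest {L : List ℕ} (hL : L.Pairwise (· < ·)) (c : List ℕ) (r : ℕ) :
    (rest L c r).Pairwise (· < ·) :=
  List.Pairwise.sublist (rest_sublist L c r) hL

lemma rest_eq_filter {L : List ℕ} (hL : L.Nodup) {c : List ℕ} (hv : ValidCode L c) :
    ∀ {r : ℕ}, r ≤ c.length →
      rest L c r = L.filter (fun y => decide (¬ y ∈ (rems L c).take r)) := by
  intro r
  induction r with
  | zero => simp
  | succ r ih =>
      intro hr
      have hrc : r < c.length := by omega
      obtain ⟨hidx, heq⟩ := rem_eq_getElem L c hv hrc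
      have hnr : (rest L c r).Nodup := nodup_rest hL c r
      have h1 : rest L c (r + 1) = (rest L c r).erase (rem L c r) := by
        have hio : (rest L c r).idxOf (rem L c r) = c.getD r 0 := by
          rw [heq]; exact List.Nodup.idxOf_getElem hnr _ _
        rw [rest_succ L c hrc, ← hio, (List.erase_eq_eraseIdx_of_idxOf rfl).symm]
      rw [h1, hnr.erase_eq_filter, ih (le_of_lt hrc), List.filter_filter]
      have htake : (rems L c).take (r + 1) = (rems L c).take r ++ [rem L c r] := by
        have h' : r < (rems L c).length := by simpa using hrc
        rw [List.take_succ, List.getElem?_eq_getElem h']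
        simp [rems]
      apply List.filter_congr
      intro y _
      rw [htake]
      by_cases h3 : y = rem L c r <;> by_cases h4 : y ∈ (rems L c).take r <;>
        simp [h3, h4]

lemma rem_not_mem_take {L : List ℕ} (hL : L.Nodup) {c : List ℕ} (hv : ValidCode L c)
    {r : ℕ} (h : r < c.length) : ¬ rem L c r ∈ (rems L c).take r := by
  have hm := rem_mem_rest L c hv h
  rw [rest_eq_filter hL hv (le_of_lt h)] at hm
  simpa using (List.mem_filter.1 hm).2

lemma rems_getElem (L c : List ℕ) {r : ℕ} (h : r < (rems L c).length) :
    (rems L c)[r] = rem L c r := by simp [rems]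

lemma nodup_rems {L : List ℕ} (hL : L.Nodup) {c : List ℕ} (hv : ValidCode L c) :
    (rems L c).Nodup := by
  rw [List.Nodup, List.pairwise_iff_getElem]
  intro a b ha hb hab
  have hbc : b < c.length := by simpa using hb
  intro hEq
  apply rem_not_mem_take hL hv hbc
  rw [rems_getElem _ _ ha, rems_getElem _ _ hb] at hEq
  rw [← hEq]
  have ha' : a < ((rems L c).take b).length := by
    rw [List.length_take]; omega
  have : ((rems L c).take b)[a] = rem L c a := by
    rw [List.getElem_take]; exact rems_getElem _ _ ha
  rw [← this]
  exact List.getElem_mem _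

lemma rems_subset {L : List ℕ} (c : List ℕ) (hv : ValidCode L c) :
    ∀ x ∈ rems L c, x ∈ L := by
  intro x hx
  rw [rems, List.mem_map] at hx
  obtain ⟨r, hr, rfl⟩ := hx
  rw [List.mem_range] at hr
  exact (rest_sublist L c r).subset (rem_mem_rest L c hv hr)

lemma codeOf_getElem (L E : List ℕ) {r : ℕ} (h : r < (codeOf L E).length) :
    (codeOf L E)[r] =
      (L.filter (fun y => decide (¬ y ∈ E.take r))).idxOf (E.getD r 0) := by
  simp [codeOf]

/-- Roundtrip 1 : `codeOf L (rems L c) = c`. -/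
lemma codeOf_rems {L : List ℕ} (hL : L.Nodup) {c : List ℕ} (hv : ValidCode L c) :
    codeOf L (rems L c) = c := by
  apply List.ext_getElem (by simp)
  intro r h1 h2
  have hr : r < c.length := h2
  rw [codeOf_getElem]
  obtain ⟨hidx, heq⟩ := rem_eq_getElem L c hv hr
  rw [rems_getD L c hr, ← rest_eq_filter hL hv (le_of_lt hr), heq,
    List.Nodup.idxOf_getElem (nodup_rest hL c r)]
  exact List.getD_eq_getElem _ _ h2

lemma getElem_not_mem_take {E : List ℕ} (hE : E.Nodup) {r : ℕ} (h : r < E.length) :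
    ¬ E[r] ∈ E.take r := by
  intro hmem
  rw [List.mem_iff_getElem] at hmem
  obtain ⟨j, hj, hjeq⟩ := hmem
  rw [List.getElem_take] at hjeq
  have hjr : j < r := lt_of_lt_of_le hj (by simp [List.length_take])
  exact (List.pairwise_iff_getElem.1 hE j r (by omega) h hjr) hjeq

lemma codeOf_spec {L E : List ℕ} (hL : L.Nodup) (hE : E.Nodup) (hsub : ∀ x ∈ E, x ∈ L) :
    ∀ {r : ℕ}, r ≤ E.length →
      rest L (codeOf L E) r = L.filter (fun y => decide (¬ y ∈ E.take r)) ∧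
      (rest L (codeOf L E) r).length = L.length - r := by
  intro r
  induction r with
  | zero => simp
  | succ r ih =>
      intro hr
      have hre : r < E.length := by omega
      obtain ⟨ih1, ih2⟩ := ih (le_of_lt hre)
      have hEr : E.getD r 0 = E[r] := List.getD_eq_getElem _ _ hre
      have hmem : E[r] ∈ rest L (codeOf L E) r := by
        rw [ih1, List.mem_filter]
        exact ⟨hsub _ (List.getElem_mem _), by
          simpa using getElem_not_mem_take hE hre⟩
      have hcr : (codeOf L E).getD r 0 = (rest L (codeOf L E) r).idxOf E[r] := by
        have h' : r < (codeOf L E).length := by simpa using hre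
        rw [List.getD_eq_getElem _ _ h', codeOf_getElem _ _ h', ih1, hEr]
      have hnr : (rest L (codeOf L E) r).Nodup := nodup_rest hL _ r
      have hlt : (rest L (codeOf L E) r).idxOf E[r] < (rest L (codeOf L E) r).length :=
        List.idxOf_lt_length_iff.2 hmem
      have hstep : rest L (codeOf L E) (r + 1) = (rest L (codeOf L E) r).erase E[r] := by
        rw [rest_succ _ _ (by simpa using hre), hcr, (List.erase_eq_eraseIdx_of_idxOf rfl).symm]
      have htake : E.take (r + 1) = E.take r ++ [E[r]] := by
        rw [List.take_succ, List.getElem?_eq_getElem hre]; rfl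
      constructor
      · rw [hstep, hnr.erase_eq_filter, ih1, List.filter_filter]
        apply List.filter_congr
        intro y _
        rw [htake]
        have hiff : (y ∉ E.take r ++ [E[r]]) ↔ (y ≠ E[r] ∧ y ∉ E.take r) := by
          simp only [List.mem_append, List.mem_singleton, not_or]; tauto
        rw [decide_eq_decide.2 hiff]
        · by_cases h3 : y = E[r] <;> by_cases h4 : y ∈ E.take r <;> simp [h3, h4]
        · exact inferInstance
      · rw [ih2] at hlt
        rw [rest_succ _ _ (by simpa using hre), hcr,
          List.length_eraseIdx_of_lt (by rw [ih2]; exact hlt), ih2]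
        omega

lemma validCode_codeOf {L E : List ℕ} (hL : L.Nodup) (hE : E.Nodup)
    (hsub : ∀ x ∈ E, x ∈ L) : ValidCode L (codeOf L E) := by
  intro r hr
  have hre : r < E.length := by simpa using hr
  obtain ⟨ih1, ih2⟩ := codeOf_spec hL hE hsub (le_of_lt hre)
  have hEr : E.getD r 0 = E[r] := List.getD_eq_getElem _ _ hre
  have hmem : E[r] ∈ rest L (codeOf L E) r := by
    rw [ih1, List.mem_filter]
    exact ⟨hsub _ (List.getElem_mem _), by simpa using getElem_not_mem_take hE hre⟩
  have hcr : (codeOf L E).getD r 0 = (rest L (codeOf L E) r).idxOf E[r] := by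
    rw [List.getD_eq_getElem _ _ hr, codeOf_getElem _ _ hr, ih1, hEr]
  rw [hcr, ← ih2]
  exact List.idxOf_lt_length_iff.2 hmem

/-- Roundtrip 2 : `rems L (codeOf L E) = E`. -/
lemma rems_codeOf {L E : List ℕ} (hL : L.Nodup) (hE : E.Nodup)
    (hsub : ∀ x ∈ E, x ∈ L) : rems L (codeOf L E) = E := by
  apply List.ext_getElem (by simp)
  intro r h1 h2
  have hr : r < E.length := h2
  obtain ⟨ih1, ih2⟩ := codeOf_spec hL hE hsub (le_of_lt hr)
  have hmem : E[r] ∈ rest L (codeOf L E) r := by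
    rw [ih1, List.mem_filter]
    exact ⟨hsub _ (List.getElem_mem _), by simpa using getElem_not_mem_take hE hr⟩
  have hcr : (codeOf L E).getD r 0 = (rest L (codeOf L E) r).idxOf E[r] := by
    have h' : r < (codeOf L E).length := by simpa using hr
    rw [List.getD_eq_getElem _ _ h', codeOf_getElem _ _ h', ih1,
      List.getD_eq_getElem _ _ hr]
  rw [rems_getElem _ _ h1, rem, hcr,
    List.getD_eq_getElem _ _ (List.idxOf_lt_length_iff.2 hmem),
    List.getElem_idxOf]

lemma sorted_eq_of_mem_iff {L M : List ℕ} (hL : L.Pairwise (· < ·)) (hM : M.Pairwise (· < ·))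
    (h : ∀ x, x ∈ L ↔ x ∈ M) : L = M := by
  haveI : IsAntisymm ℕ (· < ·) := ⟨fun a b h1 h2 => absurd h2 (not_lt.2 h1.le)⟩
  exact List.Perm.eq_of_pairwise (fun a b _ _ h1 h2 => absurd h2 (not_lt.2 h1.le)) hL hM
    ((List.perm_ext_iff_of_nodup hL.nodup hM.nodup).2 h)

lemma sorted_getElem_lt_getElem {M : List ℕ} (hM : M.Pairwise (· < ·)) {a b : ℕ}
    (hb : b < M.length) (hab : a < b) : M[a]'(by omega) < M[b] :=
  List.pairwise_iff_getElem.1 hM a b (by omega) hb hab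

lemma sorted_head_le {M : List ℕ} (hM : M.Pairwise (· < ·)) {x : ℕ} (hx : x ∈ M) :
    ∃ h0 : 0 < M.length, M[0] ≤ x := by
  rw [List.mem_iff_getElem] at hx
  obtain ⟨j, hj, rfl⟩ := hx
  refine ⟨by omega, ?_⟩
  rcases Nat.eq_zero_or_pos j with rfl | hj0
  · exact le_refl _
  · exact (sorted_getElem_lt_getElem hM hj hj0).le

lemma sorted_le_last {M : List ℕ} (hM : M.Pairwise (· < ·)) {x : ℕ} (hx : x ∈ M) :
    ∃ h0 : 0 < M.length, x ≤ M[M.length - 1]'(by omega) := by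
  rw [List.mem_iff_getElem] at hx
  obtain ⟨j, hj, rfl⟩ := hx
  refine ⟨by omega, ?_⟩
  rcases eq_or_lt_of_le (Nat.le_sub_one_of_lt hj) with heq | hlt
  · subst heq; exact le_refl _
  · exact (sorted_getElem_lt_getElem hM (by omega) hlt).le

lemma indexOf_sorted : ∀ {M : List ℕ}, M.Pairwise (· < ·) → ∀ {e : ℕ}, e ∈ M →
    M.idxOf e = (M.filter (fun y => decide (y < e))).length := by
  intro M
  induction M with
  | nil => intro _ e he; simp at he
  | cons a t ih =>
      intro hM e he
      have hat := (List.pairwise_cons.1 hM).1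
      by_cases hae : a = e
      · subst hae
        have h1 : t.filter (fun y => decide (y < a)) = [] := by
          rw [List.filter_eq_nil_iff]
          intro y hy
          simpa using not_lt.2 (hat y hy).le
        simp [List.idxOf_cons_self, h1]
      · have het : e ∈ t := by
          rcases List.mem_cons.1 he with h | h; · exact absurd h.symm hae
          exact h
        have hae2 : a < e := hat e het
        rw [List.idxOf_cons_ne _ (by exact hae)]
        simp only [List.filter_cons, decide_eq_true_eq]
        rw [if_pos hae2]
        simp [ih (List.pairwise_cons.1 hM).2 het]

lemma filter_take (P : ℕ → Bool) :
    ∀ (E : List ℕ) (r : ℕ),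
      (E.take r).filter P = (E.filter P).take ((E.take r).countP P) := by
  intro E
  induction E with
  | nil => simp
  | cons a t ih =>
      intro r
      cases r with
      | zero => simp
      | succ r =>
          by_cases h : P a <;>
            simp [List.filter_cons, List.countP_cons, h, ih r]

lemma range_filter_lt {m b : ℕ} (hb : b ≤ m) :
    (List.range m).filter (fun y => decide (y < b)) = List.range b := by
  apply sorted_eq_of_mem_iff
  · exact List.Pairwise.sublist (List.filter_sublist) List.pairwise_lt_range
  · exact List.pairwise_lt_range
  · intro x
    simp only [List.mem_filter, List.mem_range, decide_eq_true_eq]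
    omega

/-- counting earlier hits: if `M = (range m).filter f` and `u < M.length` then
`(range M[u]).countP f = u`. -/
lemma countP_range_getElem_filter {m : ℕ} (f : ℕ → Bool) {u : ℕ}
    (hu : u < ((List.range m).filter f).length) :
    (List.range (((List.range m).filter f)[u])).countP f = u := by
  have hMs : ((List.range m).filter f).Pairwise (· < ·) :=
    List.Pairwise.sublist (List.filter_sublist) List.pairwise_lt_range
  have hMu : ((List.range m).filter f)[u] < m := by
    have := (List.mem_filter.1
      (List.getElem_mem hu : ((List.range m).filter f)[u] ∈ _)).1
    simpa using this
  rw [List.countP_eq_length_filter, ← range_filter_lt hMu.le, List.filter_filter]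
  have h2 : (List.range m).filter
        (fun a => f a && decide (a < ((List.range m).filter f)[u]))
      = ((List.range m).filter f).filter
        (fun y => decide (y < ((List.range m).filter f)[u])) := by
    rw [List.filter_filter]
    apply List.filter_congr
    intro y _
    exact Bool.and_comm _ _
  rw [h2, ← indexOf_sorted hMs (List.getElem_mem hu), List.Nodup.idxOf_getElem hMs.nodup]

/-! ### Bridge between the problem's definitions and the general theory -/

lemma map_succ_getD {i : List ℕ} {r : ℕ} (h : r < i.length) :
    (i.map (· + 1)).getD r 0 = i.getD r 0 + 1 := by
  rw [List.getD_eq_getElem _ _ (by simpa using h), List.getD_eq_getElem _ _ h,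
    List.getElem_map]

lemma restAfter_eq (n : ℕ) (i : List ℕ) (r : ℕ) :
    restAfter n i r = rest (List.range (n + 1)) (i.map (· + 1)) r := by
  unfold restAfter rest
  rw [← List.map_take, List.foldl_map]

lemma elemRemoved_eq {n : ℕ} {i : List ℕ} {r : ℕ} (h : r < i.length) :
    elemRemoved n i r = rem (List.range (n + 1)) (i.map (· + 1)) r := by
  rw [elemRemoved, rem, restAfter_eq, map_succ_getD h]

lemma validCode_of_memS {n l : ℕ} {i : List ℕ} (hi : memS (n - 1) l i) :
    ValidCode (List.range (n + 1)) (i.map (· + 1)) := by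
  intro r hr
  have hrl : r < i.length := by simpa using hr
  rw [map_succ_getD hrl]
  have := hi.2 r (hi.1 ▸ hrl)
  simp only [List.length_range]
  omega

/-! ### Lemmas about the sequence `p` -/

section P

variable {k n : ℕ} {p : ℕ → ℕ}

lemma p_strict (hmono : ∀ s < k, p s < p (s + 1)) :
    ∀ {s t : ℕ}, s < t → t ≤ k → p s < p t := by
  intro s t
  induction t with
  | zero => intro h _; exact absurd h (Nat.not_lt_zero s)
  | succ t ih =>
      intro hst htk
      rcases Nat.lt_succ_iff_lt_or_eq.1 hst with h | h
      · exact (ih h (by omega)).trans (hmono t (by omega))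
      · rw [h]; exact hmono t (by omega)

lemma p_mono (hmono : ∀ s < k, p s < p (s + 1)) :
    ∀ {s t : ℕ}, s ≤ t → t ≤ k → p s ≤ p t := by
  intro s t hst htk
  rcases eq_or_lt_of_le hst with rfl | h
  · exact le_refl _
  · exact (p_strict hmono h htk).le

lemma p_ge (hp0 : p 0 = 0) (hmono : ∀ s < k, p s < p (s + 1)) :
    ∀ {t : ℕ}, t ≤ k → t ≤ p t := by
  intro t
  induction t with
  | zero => intro _; omega
  | succ t ih =>
      intro h
      have h1 := hmono t (by omega)
      have h2 := ih (by omega)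
      omega

lemma p_gap (hp0 : p 0 = 0) (hpk : p k = n) (hmono : ∀ s < k, p s < p (s + 1))
    {y : ℕ} (hy : y ≤ n) (hnot : ∀ t, t ≤ k → p t ≠ y) :
    ∃ s, s < k ∧ p s < y ∧ y < p (s + 1) := by
  have hy0 : 0 < y := by
    rcases Nat.eq_zero_or_pos y with rfl | h
    · exact absurd hp0 (hnot 0 (by omega))
    · exact h
  have hyn : y < n := by
    rcases eq_or_lt_of_le hy with rfl | h
    · exact absurd hpk (hnot k (le_refl _))
    · exact h
  have hPs : p (Nat.findGreatest (fun t => p t < y) k) < y :=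
    Nat.findGreatest_spec (P := fun t => p t < y) (Nat.zero_le k) (by show p 0 < y; rw [hp0]; omega)
  have hsk : Nat.findGreatest (fun t => p t < y) k ≤ k := Nat.findGreatest_le k
  have hsklt : Nat.findGreatest (fun t => p t < y) k < k := by
    rcases eq_or_lt_of_le hsk with h | h
    · rw [h, hpk] at hPs; omega
    · exact h
  refine ⟨Nat.findGreatest (fun t => p t < y) k, hsklt, hPs, ?_⟩
  have hng : ¬ p (Nat.findGreatest (fun t => p t < y) k + 1) < y :=
    Nat.findGreatest_is_greatest (P := fun t => p t < y) (Nat.lt_succ_self _) (by omega)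
  have := hnot (Nat.findGreatest (fun t => p t < y) k + 1) (by omega)
  omega

lemma p_sum (hp0 : p 0 = 0) (hmono : ∀ s < k, p s < p (s + 1)) :
    ∀ {K : ℕ}, K ≤ k → ∑ s ∈ Finset.range K, (p (s + 1) - p s - 1) = p K - K := by
  intro K
  induction K with
  | zero => simp [hp0]
  | succ K ih =>
      intro hK
      rw [Finset.sum_range_succ, ih (by omega)]
      have h1 := hmono K (by omega)
      have h2 := p_ge hp0 hmono (show K ≤ k by omega)
      omega

end P

/-! ### Intervals -/

lemma interval_eq {n a b : ℕ} (hb : b ≤ n) :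
    (List.range (n + 1)).filter (fun y => decide (a < y ∧ y < b)) =
      List.range' (a + 1) (b - a - 1) := by
  apply sorted_eq_of_mem_iff
  · exact List.Pairwise.sublist (List.filter_sublist) List.pairwise_lt_range
  · exact List.pairwise_lt_range'
  · intro x
    simp only [List.mem_filter, List.mem_range, List.mem_range'_1, decide_eq_true_eq]
    omega

lemma interval_length {n a b : ℕ} (hb : b ≤ n) :
    ((List.range (n + 1)).filter (fun y => decide (a < y ∧ y < b))).length = b - a - 1 := by
  rw [interval_eq hb, List.length_range']

lemma interval_sorted {n a b : ℕ} :
    ((List.range (n + 1)).filter (fun y => decide (a < y ∧ y < b))).Pairwise (· < ·) :=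
  List.Pairwise.sublist (List.filter_sublist) List.pairwise_lt_range

/-! ### Facts about valid removal procedures -/

lemma mem_take_rems {L c : List ℕ} {x r : ℕ} (h : x ∈ (rems L c).take r) :
    ∃ r', r' < r ∧ r' < c.length ∧ x = rem L c r' := by
  rw [List.mem_iff_getElem] at h
  obtain ⟨j, hj, hjeq⟩ := h
  rw [List.length_take] at hj
  have hj2 : j < (rems L c).length := lt_of_lt_of_le hj (min_le_right _ _)
  refine ⟨j, lt_of_lt_of_le hj (min_le_left _ _), by simpa using hj2, ?_⟩
  rw [← hjeq, List.getElem_take, rems_getElem _ _ hj2]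

lemma rem_range_of_memS {n l : ℕ} {i : List ℕ} (hi : memS (n - 1) l i) :
    ∀ r < i.length, 0 < rem (List.range (n + 1)) (i.map (· + 1)) r ∧
      rem (List.range (n + 1)) (i.map (· + 1)) r < n := by
  have hv := validCode_of_memS hi
  have hL : (List.range (n + 1)).Nodup := List.nodup_range
  have hil : i.length = l := hi.1
  intro r
  induction r using Nat.strong_induction_on with
  | _ r IH =>
    intro hr
    have hrc : r < (i.map (· + 1)).length := by simpa using hr
    have hfil := rest_eq_filter hL hv (le_of_lt hrc)
    have hsort : (rest (List.range (n + 1)) (i.map (· + 1)) r).Pairwise (· < ·) :=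
      sorted_rest List.pairwise_lt_range _ _
    have hbound := hi.2 r (hil ▸ hr)
    have h0 : (0 : ℕ) ∈ rest (List.range (n + 1)) (i.map (· + 1)) r := by
      rw [hfil, List.mem_filter]
      refine ⟨by simp, ?_⟩
      simp only [decide_eq_true_eq]
      intro hmem
      obtain ⟨r', hr'1, hr'2, hx⟩ := mem_take_rems hmem
      have := IH r' hr'1 (by simpa using hr'2)
      omega
    have hn : n ∈ rest (List.range (n + 1)) (i.map (· + 1)) r := by
      rw [hfil, List.mem_filter]
      refine ⟨by simp, ?_⟩
      simp only [decide_eq_true_eq]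
      intro hmem
      obtain ⟨r', hr'1, hr'2, hx⟩ := mem_take_rems hmem
      have := IH r' hr'1 (by simpa using hr'2)
      omega
    have hlen : (rest (List.range (n + 1)) (i.map (· + 1)) r).length = n + 1 - r := by
      rw [length_rest _ _ hv (le_of_lt hrc)]; simp
    obtain ⟨h0len, h0le⟩ := sorted_head_le hsort h0
    have hrest0 : (rest (List.range (n + 1)) (i.map (· + 1)) r)[0] = 0 := Nat.le_zero.1 h0le
    obtain ⟨hlen0, hnle⟩ := sorted_le_last hsort hn
    have hlast_le : (rest (List.range (n + 1)) (i.map (· + 1)) r)[(rest (List.range (n + 1)) (i.map (· + 1)) r).length - 1]'(by omega) < n + 1 := by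
      have := (rest_sublist (List.range (n + 1)) (i.map (· + 1)) r).subset
        (List.getElem_mem (l := rest (List.range (n + 1)) (i.map (· + 1)) r)
          (n := (rest (List.range (n + 1)) (i.map (· + 1)) r).length - 1) (by omega))
      simpa using this
    obtain ⟨hidx, heq⟩ := rem_eq_getElem _ _ hv hrc
    have hcr : (i.map (· + 1)).getD r 0 = i.getD r 0 + 1 := map_succ_getD hr
    have hlast : (rest (List.range (n + 1)) (i.map (· + 1)) r)[(rest (List.range (n + 1)) (i.map (· + 1)) r).length - 1]'(by omega) = n := by omega
    have hlow := sorted_getElem_lt_getElem hsort hidx (show 0 < (i.map (· + 1)).getD r 0 by omega)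
    have hhigh := sorted_getElem_lt_getElem hsort
      (show (rest (List.range (n + 1)) (i.map (· + 1)) r).length - 1 <
        (rest (List.range (n + 1)) (i.map (· + 1)) r).length by omega)
      (show (i.map (· + 1)).getD r 0 <
        (rest (List.range (n + 1)) (i.map (· + 1)) r).length - 1 by omega)
    omega

/-! ### The key characterisation of `psiJ` -/

lemma psiJ_eq_codeOf {n a b : ℕ} {i : List ℕ}
    (hv : ValidCode (List.range (n + 1)) (i.map (· + 1))) (hab : a < b) (hbn : b ≤ n) :
    psiJ n i a b =
      codeOf ((List.range (n + 1)).filter (fun y => decide (a < y ∧ y < b)))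
        ((rems (List.range (n + 1)) (i.map (· + 1))).filter
          (fun y => decide (a < y ∧ y < b))) := by
  have hL : (List.range (n + 1)).Nodup := List.nodup_range
  set L0 := List.range (n + 1) with hL0
  set c := i.map (· + 1) with hc
  set g := rem L0 c with hg
  set Ps : ℕ → Bool := fun y => decide (a < y ∧ y < b) with hPs
  set f : ℕ → Bool := fun r => decide (a < elemRemoved n i r ∧ elemRemoved n i r < b)
    with hf
  set rlist := (List.range i.length).filter f with hrlist
  have hclen : c.length = i.length := by rw [hc]; simp
  have hEg : ∀ r < i.length, elemRemoved n i r = g r := fun r hr => elemRemoved_eq hr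
  -- `Es = rlist.map g`
  have hEs : (rems L0 c).filter Ps = rlist.map g := by
    rw [rems, hclen, List.filter_map]
    congr 1
    apply List.filter_congr
    intro r hr
    rw [List.mem_range] at hr
    show Ps (g r) = f r
    rw [hf]
    simp only [hEg r hr]
    rfl
  have hlen1 : (psiJ n i a b).length = rlist.length := by
    rw [psiJ, List.length_map, hrlist]
  have hlen2 : (codeOf (L0.filter Ps) ((rems L0 c).filter Ps)).length = rlist.length := by
    rw [length_codeOf, hEs, List.length_map]
  apply List.ext_getElem (by rw [hlen1, hlen2])
  intro u h1 h2
  have hu : u < rlist.length := by rwa [hlen1] at h1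
  have hu2 : u < ((rems L0 c).filter Ps).length := by rw [hEs, List.length_map]; exact hu
  -- the step `r` and removed element `e`
  have hrmem : rlist[u] ∈ rlist := List.getElem_mem hu
  have hrl : rlist[u] < i.length := by
    have := (List.mem_filter.1 hrmem).1
    simpa using this
  have hfr : f rlist[u] = true := (List.mem_filter.1 hrmem).2
  have hae : a < g rlist[u] ∧ g rlist[u] < b := by
    rw [hf] at hfr
    simpa [hEg _ hrl] using hfr
  have hrcl : rlist[u] < c.length := by rwa [hclen]
  -- the set identity for takes
  have hcount : ((rems L0 c).take rlist[u]).countP Ps = u := by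
    have htr : (rems L0 c).take rlist[u] = (List.range rlist[u]).map g := by
      rw [rems, ← List.map_take, hclen, List.take_range, Nat.min_eq_left hrl.le]
    rw [htr, List.countP_map]
    have hcong : ∀ x ∈ List.range rlist[u], ((Ps ∘ g) x = true ↔ f x = true) := by
      intro x hx
      rw [List.mem_range] at hx
      rw [hf]
      simp only [Function.comp_apply, hPs, hEg x (lt_trans hx hrl)]
    rw [List.countP_congr hcong]
    exact countP_range_getElem_filter f hu
  have htake : ((rems L0 c).take rlist[u]).filter Ps = ((rems L0 c).filter Ps).take u := by
    rw [filter_take, hcount]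
  -- the removed element is in the remaining interval list
  have hgmem : g rlist[u] ∈ rest L0 c rlist[u] := rem_mem_rest _ _ hv hrcl
  have hgnot : ¬ g rlist[u] ∈ (rems L0 c).take rlist[u] := rem_not_mem_take hL hv hrcl
  have hgL0 : g rlist[u] ∈ L0 := (rest_sublist L0 c rlist[u]).subset hgmem
  have hgnot2 : ¬ g rlist[u] ∈ ((rems L0 c).filter Ps).take u := by
    rw [← htake]
    intro hmem
    exact hgnot (List.mem_of_mem_filter hmem)
  -- identify the two lists whose length/indexOf we compute
  have hlists : (rest L0 c rlist[u]).filter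
        (fun y => decide (a < y ∧ y < g rlist[u])) =
      ((L0.filter Ps).filter
          (fun y => decide (¬ y ∈ ((rems L0 c).filter Ps).take u))).filter
        (fun y => decide (y < g rlist[u])) := by
    apply sorted_eq_of_mem_iff
    · exact List.Pairwise.sublist (List.filter_sublist)
        (sorted_rest List.pairwise_lt_range _ _)
    · exact List.Pairwise.sublist
        ((List.filter_sublist).trans ((List.filter_sublist).trans (List.filter_sublist)))
        List.pairwise_lt_range
    · intro x
      rw [rest_eq_filter hL hv (le_of_lt hrcl)]
      have hxiff : x ∈ ((rems L0 c).filter Ps).take u ↔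
          x ∈ (rems L0 c).take rlist[u] ∧ (a < x ∧ x < b) := by
        rw [← htake, List.mem_filter, hPs]
        simp
      have hgb : g rlist[u] < b := hae.2
      simp only [List.mem_filter, decide_eq_true_eq, hxiff]
      simp only [hPs, decide_eq_true_eq]
      constructor
      · rintro ⟨⟨hxL, hxnt⟩, hax, hxg⟩
        exact ⟨⟨⟨hxL, hax, lt_trans hxg hgb⟩, fun hmem => hxnt hmem.1⟩, hxg⟩
      · rintro ⟨⟨⟨hxL, hax, hxb⟩, hxnt⟩, hxg⟩
        exact ⟨⟨hxL, fun hmem => hxnt ⟨hmem, hax, hxb⟩⟩, hax, hxg⟩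
  -- compute both sides
  have hgetD : ((rems L0 c).filter Ps).getD u 0 = g rlist[u] := by
    rw [List.getD_eq_getElem _ _ hu2, List.getElem_of_eq hEs, List.getElem_map]
  have hsortedA : ((L0.filter Ps).filter
      (fun y => decide (¬ y ∈ ((rems L0 c).filter Ps).take u))).Pairwise (· < ·) :=
    List.Pairwise.sublist
      ((List.filter_sublist).trans (List.filter_sublist)) List.pairwise_lt_range
  have hgA : g rlist[u] ∈ (L0.filter Ps).filter
      (fun y => decide (¬ y ∈ ((rems L0 c).filter Ps).take u)) := by
    rw [List.mem_filter, List.mem_filter]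
    refine ⟨⟨hgL0, by simp [hPs]; exact hae⟩, by simpa using hgnot2⟩
  -- LHS
  have hLHS : (psiJ n i a b)[u] = ((rest L0 c rlist[u]).filter
      (fun y => decide (a < y ∧ y < g rlist[u]))).length := by
    have hpsi : psiJ n i a b = rlist.map (fun r => ((restAfter n i r).filter
        (fun y => decide (a < y ∧ y < elemRemoved n i r))).length) := rfl
    rw [List.getElem_of_eq hpsi, List.getElem_map, restAfter_eq, hEg _ hrl]
  -- RHS
  have hRHS : (codeOf (L0.filter Ps) ((rems L0 c).filter Ps))[u] =
      (((L0.filter Ps).filter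
          (fun y => decide (¬ y ∈ ((rems L0 c).filter Ps).take u))).filter
        (fun y => decide (y < g rlist[u]))).length := by
    rw [codeOf_getElem _ _ h2, hgetD, indexOf_sorted hsortedA hgA]
  rw [hLHS, hRHS, hlists]

/-! ### More helpers -/

lemma length_filter_range_eq_card {m : ℕ} (P : ℕ → Prop) [DecidablePred P] :
    ((List.range m).filter (fun r => decide (P r))).length =
      ((Finset.range m).filter P).card := by
  induction m with
  | zero => simp
  | succ m ih =>
      rw [List.range_succ, List.filter_append, List.length_append, ih,
        Finset.range_add_one, Finset.filter_insert]
      by_cases h : P m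
      · rw [if_pos h, Finset.card_insert_of_notMem (by simp)]
        simp [h]
      · rw [if_neg h]
        simp [h]

lemma restList_eq_filter {n : ℕ} {i : List ℕ}
    (hv : ValidCode (List.range (n + 1)) (i.map (· + 1))) :
    restList n i = (List.range (n + 1)).filter
      (fun y => decide (¬ y ∈ rems (List.range (n + 1)) (i.map (· + 1)))) := by
  rw [restList, restAfter_eq]
  have h1 : i.length = (i.map (· + 1) : List ℕ).length := by simp
  rw [h1, rest_eq_filter (List.nodup_range) hv (le_refl _)]
  congr 1
  funext y
  rw [List.take_of_length_le (by simp)]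

lemma sorted_map_p {k : ℕ} {p : ℕ → ℕ} (hmono : ∀ s < k, p s < p (s + 1)) :
    ((List.range (k + 1)).map p).Pairwise (· < ·) := by
  rw [List.pairwise_iff_getElem]
  intro a b ha hb hab
  simp only [List.getElem_map, List.getElem_range]
  rw [List.length_map, List.length_range] at hb
  exact p_strict hmono hab (by omega)

lemma mem_E_iff {n k l : ℕ} {p : ℕ → ℕ} {i : List ℕ}
    (hi : memS (n - 1) l i) (hrest : restList n i = (List.range (k + 1)).map p) :
    ∀ y, y ∈ rems (List.range (n + 1)) (i.map (· + 1)) ↔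
      (y < n + 1 ∧ ∀ t, t ≤ k → p t ≠ y) := by
  have hv := validCode_of_memS hi
  have hfil := restList_eq_filter hv
  rw [hrest] at hfil
  intro y
  constructor
  · intro hy
    have hyL : y ∈ List.range (n + 1) := rems_subset _ hv y hy
    have hynot : ¬ y ∈ (List.range (k + 1)).map p := by
      rw [hfil]
      intro hmem
      have := (List.mem_filter.1 hmem).2
      simp only [decide_eq_true_eq] at this
      exact this hy
    refine ⟨by simpa using hyL, ?_⟩
    intro t htk hpt
    exact hynot (List.mem_map.2 ⟨t, List.mem_range.2 (by omega), hpt⟩)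
  · rintro ⟨hyn, hnot⟩
    by_contra hyE
    have : y ∈ (List.range (k + 1)).map p := by
      rw [hfil, List.mem_filter]
      exact ⟨by simpa using hyn, by simpa using hyE⟩
    obtain ⟨t, ht, hpt⟩ := List.mem_map.1 this
    rw [List.mem_range] at ht
    exact hnot t (by omega) hpt

/-! ### Well-definedness of the components -/

section Main

variable {n k l : ℕ} {p : ℕ → ℕ}

lemma Es_mem_iff (hpk : p k = n) (hmono : ∀ s < k, p s < p (s + 1))
    {i : List ℕ} (hi : memS (n - 1) l i)
    (hrest : restList n i = (List.range (k + 1)).map p) {s : ℕ} (hs : s < k) :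
    ∀ y, y ∈ (rems (List.range (n + 1)) (i.map (· + 1))).filter
        (fun y => decide (p s < y ∧ y < p (s + 1))) ↔
      y ∈ (List.range (n + 1)).filter (fun y => decide (p s < y ∧ y < p (s + 1))) := by
  intro y
  simp only [List.mem_filter, decide_eq_true_eq]
  constructor
  · rintro ⟨hyE, hy⟩
    exact ⟨rems_subset _ (validCode_of_memS hi) y hyE, hy⟩
  · rintro ⟨hyL, hy⟩
    refine ⟨?_, hy⟩
    rw [mem_E_iff hi hrest y]
    refine ⟨by simpa using hyL, ?_⟩
    intro t htk hpt
    rcases le_or_gt t s with h | h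
    · have := p_mono hmono h (by omega)
      omega
    · have := p_mono hmono (show s + 1 ≤ t by omega) htk
      omega

lemma Es_length (hpk : p k = n) (hmono : ∀ s < k, p s < p (s + 1))
    {i : List ℕ} (hi : memS (n - 1) l i)
    (hrest : restList n i = (List.range (k + 1)).map p) {s : ℕ} (hs : s < k) :
    ((rems (List.range (n + 1)) (i.map (· + 1))).filter
      (fun y => decide (p s < y ∧ y < p (s + 1)))).length = p (s + 1) - p s - 1 := by
  have hnodE : (rems (List.range (n + 1)) (i.map (· + 1))).Nodup :=
    nodup_rems (List.nodup_range) (validCode_of_memS hi)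
  have hperm := (List.perm_ext_iff_of_nodup (hnodE.filter _)
    ((List.nodup_range).filter _)).2 (Es_mem_iff hpk hmono hi hrest hs)
  rw [hperm.length_eq, interval_length]
  calc p (s + 1) ≤ p k := p_mono hmono (by omega) (le_refl _)
  _ = n := hpk

lemma psiJ_len (hpk : p k = n) (hmono : ∀ s < k, p s < p (s + 1))
    {i : List ℕ} (hi : memS (n - 1) l i)
    (hrest : restList n i = (List.range (k + 1)).map p) {s : ℕ} (hs : s < k) :
    (psiJ n i (p s) (p (s + 1))).length = p (s + 1) - p s - 1 := by
  rw [psiJ_eq_codeOf (validCode_of_memS hi) (hmono s hs)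
      (by calc p (s + 1) ≤ p k := p_mono hmono (by omega) (le_refl _)
          _ = n := hpk),
    length_codeOf, Es_length hpk hmono hi hrest hs]

lemma psiJ_memS (hpk : p k = n) (hmono : ∀ s < k, p s < p (s + 1))
    {i : List ℕ} (hi : memS (n - 1) l i)
    (hrest : restList n i = (List.range (k + 1)).map p) {s : ℕ} (hs : s < k) :
    memS (p (s + 1) - p s - 1) (p (s + 1) - p s - 1) (psiJ n i (p s) (p (s + 1))) := by
  have hbn : p (s + 1) ≤ n := by
    calc p (s + 1) ≤ p k := p_mono hmono (by omega) (le_refl _)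
    _ = n := hpk
  have hnodE : (rems (List.range (n + 1)) (i.map (· + 1))).Nodup :=
    nodup_rems (List.nodup_range) (validCode_of_memS hi)
  have hkey := psiJ_eq_codeOf (validCode_of_memS hi) (hmono s hs) hbn
  have hv2 : ValidCode ((List.range (n + 1)).filter
      (fun y => decide (p s < y ∧ y < p (s + 1))))
      (codeOf ((List.range (n + 1)).filter (fun y => decide (p s < y ∧ y < p (s + 1))))
        ((rems (List.range (n + 1)) (i.map (· + 1))).filter
          (fun y => decide (p s < y ∧ y < p (s + 1))))) :=
    validCode_codeOf ((List.nodup_range).filter _) (hnodE.filter _)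
      (fun x hx => (Es_mem_iff hpk hmono hi hrest hs x).1 hx)
  refine ⟨psiJ_len hpk hmono hi hrest hs, ?_⟩
  intro t ht
  have ht2 : t < (psiJ n i (p s) (p (s + 1))).length := by
    rw [psiJ_len hpk hmono hi hrest hs]; exact ht
  have ht3 : t < (codeOf ((List.range (n + 1)).filter
      (fun y => decide (p s < y ∧ y < p (s + 1))))
      ((rems (List.range (n + 1)) (i.map (· + 1))).filter
        (fun y => decide (p s < y ∧ y < p (s + 1))))).length := by
    rw [← hkey]; exact ht2
  have := hv2 t ht3
  rw [interval_length hbn] at this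
  rw [hkey]
  omega

lemma psiAlpha_card (hpk : p k = n) (hmono : ∀ s < k, p s < p (s + 1))
    {i : List ℕ} (hi : memS (n - 1) l i)
    (hrest : restList n i = (List.range (k + 1)).map p) {s : ℕ} (hs : s < k) :
    (psiAlpha n i (p s) (p (s + 1))).card = p (s + 1) - p s - 1 := by
  have : (psiAlpha n i (p s) (p (s + 1))).card
      = (psiJ n i (p s) (p (s + 1))).length := by
    rw [psiAlpha, psiJ, List.length_map, length_filter_range_eq_card]
  rw [this, psiJ_len hpk hmono hi hrest hs]

lemma psiAlpha_mem {a b r : ℕ} {i : List ℕ} :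
    r ∈ psiAlpha n i a b ↔
      r < i.length ∧ a < elemRemoved n i r ∧ elemRemoved n i r < b := by
  rw [psiAlpha, Finset.mem_filter, Finset.mem_range]

lemma psiAlpha_shuffle (hk1 : 1 ≤ k) (hkn : k ≤ n) (hl : l = n - k)
    (hp0 : p 0 = 0) (hpk : p k = n) (hmono : ∀ s < k, p s < p (s + 1))
    {i : List ℕ} (hi : memS (n - 1) l i)
    (hrest : restList n i = (List.range (k + 1)).map p) :
    IsShuffleF (fun s : Fin k => p (s.1 + 1) - p s.1 - 1)
      (fun s : Fin k => psiAlpha n i (p s.1) (p (s.1 + 1))) := by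
  have hsum : ∑ s : Fin k, (p (s.1 + 1) - p s.1 - 1) = l := by
    rw [Fin.sum_univ_eq_sum_range (fun s => p (s + 1) - p s - 1) k,
      p_sum hp0 hmono (le_refl k), hpk, hl]
  refine ⟨fun s => psiAlpha_card hpk hmono hi hrest s.2, ?_, ?_⟩
  · intro s t hst
    rw [Finset.disjoint_left]
    intro r hr1 hr2
    rw [psiAlpha_mem] at hr1 hr2
    have hne : s.1 ≠ t.1 := fun h => hst (Fin.ext h)
    rcases lt_or_gt_of_ne hne with h | h
    · have := p_mono hmono (show s.1 + 1 ≤ t.1 by omega) (by omega)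
      omega
    · have := p_mono hmono (show t.1 + 1 ≤ s.1 by omega) (by omega)
      omega
  · ext r
    rw [Finset.mem_biUnion, Finset.mem_range, hsum]
    constructor
    · rintro ⟨s, _, hr⟩
      rw [psiAlpha_mem] at hr
      rw [← hi.1]
      exact hr.1
    · intro hr
      have hrl : r < i.length := by rw [hi.1]; exact hr
      have hrc : r < (i.map (· + 1) : List ℕ).length := by simpa using hrl
      have hEmem : elemRemoved n i r ∈ rems (List.range (n + 1)) (i.map (· + 1)) := by
        rw [elemRemoved_eq hrl, ← rems_getElem _ _ (by simpa using hrc)]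
        exact List.getElem_mem _
      rw [mem_E_iff hi hrest] at hEmem
      obtain ⟨s, hsk, hs1, hs2⟩ := p_gap hp0 hpk hmono
        (show elemRemoved n i r ≤ n by omega) hEmem.2
      exact ⟨⟨s, hsk⟩, Finset.mem_univ _, psiAlpha_mem.2 ⟨hrl, hs1, hs2⟩⟩

/-- the filtered removed-element list is the image of the filtered step list. -/
lemma filter_rems_eq_map {a b : ℕ} {i : List ℕ} :
    (rems (List.range (n + 1)) (i.map (· + 1))).filter
        (fun y => decide (a < y ∧ y < b)) =
      ((List.range i.length).filter
          (fun r => decide (a < elemRemoved n i r ∧ elemRemoved n i r < b))).map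
        (rem (List.range (n + 1)) (i.map (· + 1))) := by
  rw [rems, List.length_map, List.filter_map]
  congr 1
  apply List.filter_congr
  intro r hr
  rw [List.mem_range] at hr
  show (fun y => decide (a < y ∧ y < b)) (rem (List.range (n + 1)) (i.map (· + 1)) r) = _
  simp only [elemRemoved_eq hr]

lemma psi_inj (hk1 : 1 ≤ k) (hkn : k ≤ n) (hl : l = n - k)
    (hp0 : p 0 = 0) (hpk : p k = n) (hmono : ∀ s < k, p s < p (s + 1))
    {i i' : List ℕ} (hi : memS (n - 1) l i)
    (hrest : restList n i = (List.range (k + 1)).map p)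
    (hi' : memS (n - 1) l i')
    (hrest' : restList n i' = (List.range (k + 1)).map p)
    (hA : ∀ s : Fin k, psiAlpha n i (p s.1) (p (s.1 + 1)) =
      psiAlpha n i' (p s.1) (p (s.1 + 1)))
    (hJ : ∀ s : Fin k, psiJ n i (p s.1) (p (s.1 + 1)) =
      psiJ n i' (p s.1) (p (s.1 + 1))) : i = i' := by
  have hL : (List.range (n + 1)).Nodup := List.nodup_range
  have hv := validCode_of_memS hi
  have hv' := validCode_of_memS hi'
  have hnodE : (rems (List.range (n + 1)) (i.map (· + 1))).Nodup := nodup_rems hL hv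
  have hnodE' : (rems (List.range (n + 1)) (i'.map (· + 1))).Nodup := nodup_rems hL hv'
  -- step 2 : the filtered removed lists agree
  have hEs : ∀ s : Fin k,
      (rems (List.range (n + 1)) (i.map (· + 1))).filter
        (fun y => decide (p s.1 < y ∧ y < p (s.1 + 1))) =
      (rems (List.range (n + 1)) (i'.map (· + 1))).filter
        (fun y => decide (p s.1 < y ∧ y < p (s.1 + 1))) := by
    intro s
    have hbn : p (s.1 + 1) ≤ n := by
      calc p (s.1 + 1) ≤ p k := p_mono hmono (by omega) (le_refl _)
      _ = n := hpk
    have h1 := psiJ_eq_codeOf (n := n) (i := i) hv (hmono s.1 s.2) hbn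
    have h2 := psiJ_eq_codeOf (n := n) (i := i') hv' (hmono s.1 s.2) hbn
    have h3 : codeOf ((List.range (n + 1)).filter
          (fun y => decide (p s.1 < y ∧ y < p (s.1 + 1))))
        ((rems (List.range (n + 1)) (i.map (· + 1))).filter
          (fun y => decide (p s.1 < y ∧ y < p (s.1 + 1)))) =
        codeOf ((List.range (n + 1)).filter
          (fun y => decide (p s.1 < y ∧ y < p (s.1 + 1))))
        ((rems (List.range (n + 1)) (i'.map (· + 1))).filter
          (fun y => decide (p s.1 < y ∧ y < p (s.1 + 1)))) := by
      rw [← h1, ← h2]; exact hJ s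
    have r1 := rems_codeOf (L := (List.range (n + 1)).filter
        (fun y => decide (p s.1 < y ∧ y < p (s.1 + 1))))
      (hL.filter _) (hnodE.filter _)
      (fun x hx => (Es_mem_iff hpk hmono hi hrest s.2 x).1 hx)
    have r2 := rems_codeOf (L := (List.range (n + 1)).filter
        (fun y => decide (p s.1 < y ∧ y < p (s.1 + 1))))
      (hL.filter _) (hnodE'.filter _)
      (fun x hx => (Es_mem_iff hpk hmono hi' hrest' s.2 x).1 hx)
    rw [← r1, ← r2, h3]
  -- step 3 : the step lists agree
  have hrl : ∀ s : Fin k,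
      (List.range i.length).filter
        (fun r => decide (p s.1 < elemRemoved n i r ∧ elemRemoved n i r < p (s.1 + 1))) =
      (List.range i'.length).filter
        (fun r => decide (p s.1 < elemRemoved n i' r ∧ elemRemoved n i' r < p (s.1 + 1))) := by
    intro s
    apply sorted_eq_of_mem_iff
    · exact List.Pairwise.sublist (List.filter_sublist) List.pairwise_lt_range
    · exact List.Pairwise.sublist (List.filter_sublist) List.pairwise_lt_range
    · intro r
      have e1 : r ∈ (List.range i.length).filter
          (fun r => decide (p s.1 < elemRemoved n i r ∧ elemRemoved n i r < p (s.1 + 1)))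
          ↔ r ∈ psiAlpha n i (p s.1) (p (s.1 + 1)) := by
        rw [psiAlpha_mem, List.mem_filter, List.mem_range]
        simp
      have e2 : r ∈ (List.range i'.length).filter
          (fun r => decide (p s.1 < elemRemoved n i' r ∧ elemRemoved n i' r < p (s.1 + 1)))
          ↔ r ∈ psiAlpha n i' (p s.1) (p (s.1 + 1)) := by
        rw [psiAlpha_mem, List.mem_filter, List.mem_range]
        simp
      rw [e1, e2, hA s]
  -- step 4 : the removed-element lists agree
  have hE : rems (List.range (n + 1)) (i.map (· + 1)) =
      rems (List.range (n + 1)) (i'.map (· + 1)) := by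
    apply List.ext_getElem (by simp [hi.1, hi'.1])
    intro r h1 h2
    have hrl1 : r < i.length := by simpa using h1
    have hrl2 : r < i'.length := by simpa using h2
    have hgr : (rems (List.range (n + 1)) (i.map (· + 1)))[r] =
        elemRemoved n i r := by
      rw [rems_getElem _ _ h1, elemRemoved_eq hrl1]
    have hgr' : (rems (List.range (n + 1)) (i'.map (· + 1)))[r] =
        elemRemoved n i' r := by
      rw [rems_getElem _ _ h2, elemRemoved_eq hrl2]
    -- find the interval of the removed element
    have hEmem : elemRemoved n i r ∈ rems (List.range (n + 1)) (i.map (· + 1)) := by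
      rw [← hgr]; exact List.getElem_mem _
    have hEc := (mem_E_iff hi hrest _).1 hEmem
    obtain ⟨s, hsk, hs1, hs2⟩ := p_gap hp0 hpk hmono
      (show elemRemoved n i r ≤ n by omega) hEc.2
    -- `r` is in both step lists
    have hrin : r ∈ (List.range i.length).filter
        (fun r => decide (p s < elemRemoved n i r ∧ elemRemoved n i r < p (s + 1))) := by
      rw [List.mem_filter, List.mem_range]
      exact ⟨hrl1, by simp; exact ⟨hs1, hs2⟩⟩
    have hrin' : r ∈ (List.range i'.length).filter
        (fun r => decide (p s < elemRemoved n i' r ∧ elemRemoved n i' r < p (s + 1))) := by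
      rw [← hrl ⟨s, hsk⟩]; exact hrin
    -- identify the values through the filtered lists
    have key : ∀ (i₀ : List ℕ) (hr₀ : r < i₀.length), r ∈ (List.range i₀.length).filter
        (fun r => decide (p s < elemRemoved n i₀ r ∧ elemRemoved n i₀ r < p (s + 1))) →
        elemRemoved n i₀ r = ((rems (List.range (n + 1)) (i₀.map (· + 1))).filter
          (fun y => decide (p s < y ∧ y < p (s + 1)))).getD
          (((List.range i₀.length).filter (fun r => decide (p s < elemRemoved n i₀ r ∧
            elemRemoved n i₀ r < p (s + 1)))).idxOf r) 0 := by
      intro i₀ hr₀ hmem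
      have hidx : ((List.range i₀.length).filter (fun r => decide (p s < elemRemoved n i₀ r ∧
          elemRemoved n i₀ r < p (s + 1)))).idxOf r <
          ((List.range i₀.length).filter (fun r => decide (p s < elemRemoved n i₀ r ∧
            elemRemoved n i₀ r < p (s + 1)))).length := List.idxOf_lt_length_iff.2 hmem
      rw [filter_rems_eq_map, List.getD_eq_getElem _ _ (by simpa using hidx),
        List.getElem_map, List.getElem_idxOf hidx, elemRemoved_eq hr₀]
    have k1 := key i hrl1 hrin
    have k2 := key i' hrl2 hrin'
    rw [hgr, hgr', k1, k2, hrl ⟨s, hsk⟩, hEs ⟨s, hsk⟩]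
  -- step 5/6 : conclude
  have hc : i.map (· + 1) = i'.map (· + 1) := by
    rw [← codeOf_rems hL hv, ← codeOf_rems hL hv', hE]
  exact List.map_injective_iff.2 (fun x y h => by omega) hc

lemma int_disj (hmono : ∀ s < k, p s < p (s + 1)) {s t : ℕ} (hs : s < k) (ht : t < k)
    {y : ℕ} (h1 : p s < y ∧ y < p (s + 1)) (h2 : p t < y ∧ y < p (t + 1)) : s = t := by
  rcases lt_trichotomy s t with h | h | h
  · have := p_mono hmono (show s + 1 ≤ t by omega) (by omega); omega
  · exact h
  · have := p_mono hmono (show t + 1 ≤ s by omega) (by omega); omega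

lemma codeOf_bounds {E : List ℕ} (hEnod : E.Nodup)
    (hsub : ∀ y ∈ E, y ∈ List.range (n + 1)) (hpos : ∀ y ∈ E, 0 < y ∧ y < n)
    {r : ℕ} (hr : r < E.length) :
    1 ≤ (codeOf (List.range (n + 1)) E).getD r 0 ∧
      (codeOf (List.range (n + 1)) E).getD r 0 + r + 2 ≤ n + 1 := by
  have hL : (List.range (n + 1)).Nodup := List.nodup_range
  obtain ⟨hfil, hlen⟩ := codeOf_spec hL hEnod hsub (le_of_lt hr)
  have hlen' : (rest (List.range (n + 1)) (codeOf (List.range (n + 1)) E) r).length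
      = n + 1 - r := by rw [hlen]; simp
  have hEr : E.getD r 0 = E[r] := List.getD_eq_getElem _ _ hr
  have hgd : (codeOf (List.range (n + 1)) E).getD r 0 =
      (rest (List.range (n + 1)) (codeOf (List.range (n + 1)) E) r).idxOf E[r] := by
    rw [List.getD_eq_getElem _ _ (by simpa using hr), codeOf_getElem _ _ (by simpa using hr),
      hfil, hEr]
  have hsort : (rest (List.range (n + 1)) (codeOf (List.range (n + 1)) E) r).Pairwise (· < ·) :=
    sorted_rest List.pairwise_lt_range _ _
  have hmem : E[r] ∈ rest (List.range (n + 1)) (codeOf (List.range (n + 1)) E) r := by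
    rw [hfil, List.mem_filter]
    exact ⟨hsub _ (List.getElem_mem _), by simpa using getElem_not_mem_take hEnod hr⟩
  have h0 : (0 : ℕ) ∈ rest (List.range (n + 1)) (codeOf (List.range (n + 1)) E) r := by
    rw [hfil, List.mem_filter]
    refine ⟨by simp, ?_⟩
    simp only [decide_eq_true_eq]
    intro hc
    have := hpos 0 (List.take_subset _ _ hc)
    omega
  have hn : n ∈ rest (List.range (n + 1)) (codeOf (List.range (n + 1)) E) r := by
    rw [hfil, List.mem_filter]
    refine ⟨by simp, ?_⟩
    simp only [decide_eq_true_eq]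
    intro hc
    have := hpos n (List.take_subset _ _ hc)
    omega
  obtain ⟨h0len, h0le⟩ := sorted_head_le hsort h0
  obtain ⟨hlen0, hnle⟩ := sorted_le_last hsort hn
  have hlast_le : (rest (List.range (n + 1)) (codeOf (List.range (n + 1)) E) r)[(rest (List.range (n + 1)) (codeOf (List.range (n + 1)) E) r).length - 1]'(by omega) < n + 1 := by
    have := (rest_sublist (List.range (n + 1)) (codeOf (List.range (n + 1)) E) r).subset
      (List.getElem_mem (l := rest (List.range (n + 1)) (codeOf (List.range (n + 1)) E) r)
        (n := (rest (List.range (n + 1)) (codeOf (List.range (n + 1)) E) r).length - 1)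
        (by omega))
    simpa using this
  have hidx : (rest (List.range (n + 1)) (codeOf (List.range (n + 1)) E) r).idxOf E[r] <
      (rest (List.range (n + 1)) (codeOf (List.range (n + 1)) E) r).length :=
    List.idxOf_lt_length_iff.2 hmem
  have hval : (rest (List.range (n + 1)) (codeOf (List.range (n + 1)) E) r)[(rest (List.range (n + 1)) (codeOf (List.range (n + 1)) E) r).idxOf E[r]] = E[r] :=
    List.getElem_idxOf hidx
  have hEpos := hpos E[r] (List.getElem_mem _)
  constructor
  · rw [hgd]
    by_contra hcon
    have h00 : (rest (List.range (n + 1)) (codeOf (List.range (n + 1)) E) r).idxOf E[r]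
        = 0 := by omega
    have := (getElem_congr_idx (c := rest (List.range (n + 1)) (codeOf (List.range (n + 1)) E) r) (w := hidx) h00).symm.trans hval
    omega
  · rw [hgd]
    by_contra hcon
    have hge : (rest (List.range (n + 1)) (codeOf (List.range (n + 1)) E) r).idxOf E[r]
        = (rest (List.range (n + 1)) (codeOf (List.range (n + 1)) E) r).length - 1 := by
      omega
    have := (getElem_congr_idx (c := rest (List.range (n + 1)) (codeOf (List.range (n + 1)) E) r) (w := hidx) hge).symm.trans hval
    omega

end Main

/-! ### Surjectivity : construction of the removal procedure -/

/-- the increasing list of steps assigned to a block. -/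
def stepsOf (l : ℕ) (A : Finset ℕ) : List ℕ :=
  (List.range l).filter (fun r => decide (r ∈ A))

/-- the removal sequence inside one interval, given its code. -/
def FsOf (n a b : ℕ) (js : List ℕ) : List ℕ :=
  rems ((List.range (n + 1)).filter (fun y => decide (a < y ∧ y < b))) js

/-- the global removed-element function built from a shuffle and codes. -/
def gOf (n k l : ℕ) (p : ℕ → ℕ) (α : Fin k → Finset ℕ) (j : Fin k → List ℕ) (r : ℕ) : ℕ :=
  ∑ s : Fin k, if r ∈ α s
    then (FsOf n (p s.1) (p (s.1 + 1)) (j s)).getD ((stepsOf l (α s)).idxOf r) 0 else 0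

lemma stepsOf_sorted (l : ℕ) (A : Finset ℕ) : (stepsOf l A).Pairwise (· < ·) :=
  List.Pairwise.sublist (List.filter_sublist) List.pairwise_lt_range

lemma mem_stepsOf {l : ℕ} {A : Finset ℕ} (hsub : A ⊆ Finset.range l) {r : ℕ} :
    r ∈ stepsOf l A ↔ r ∈ A := by
  rw [stepsOf, List.mem_filter, List.mem_range]
  constructor
  · rintro ⟨_, h⟩; simpa using h
  · intro h
    exact ⟨Finset.mem_range.1 (hsub h), by simpa using h⟩

lemma stepsOf_length {l : ℕ} {A : Finset ℕ} (hsub : A ⊆ Finset.range l) :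
    (stepsOf l A).length = A.card := by
  have h1 : (stepsOf l A).toFinset = A := by
    ext x
    rw [List.mem_toFinset, mem_stepsOf hsub]
  calc (stepsOf l A).length = (stepsOf l A).toFinset.card :=
        (List.toFinset_card_of_nodup (stepsOf_sorted l A).nodup).symm
  _ = A.card := by rw [h1]

section Surj

variable {n k l : ℕ} {p : ℕ → ℕ} {α : Fin k → Finset ℕ} {j : Fin k → List ℕ}

lemma gOf_eq (hdisj : ∀ s t : Fin k, s ≠ t → Disjoint (α s) (α t)) {r : ℕ} {s : Fin k}
    (hr : r ∈ α s) :
    gOf n k l p α j r =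
      (FsOf n (p s.1) (p (s.1 + 1)) (j s)).getD ((stepsOf l (α s)).idxOf r) 0 := by
  rw [gOf, Finset.sum_eq_single_of_mem s (Finset.mem_univ s), if_pos hr]
  intro t _ hts
  rw [if_neg]
  intro hrt
  exact Finset.disjoint_left.1 (hdisj t s hts) hrt hr

lemma FsOf_valid {s : Fin k} (hbn : p (s.1 + 1) ≤ n)
    (hjs : memS (p (s.1 + 1) - p s.1 - 1) (p (s.1 + 1) - p s.1 - 1) (j s)) :
    ValidCode ((List.range (n + 1)).filter
      (fun y => decide (p s.1 < y ∧ y < p (s.1 + 1)))) (j s) := by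
  intro u hu
  rw [interval_length hbn]
  have := hjs.2 u (by rw [← hjs.1]; exact hu)
  omega

lemma FsOf_length {s : Fin k}
    (hjs : memS (p (s.1 + 1) - p s.1 - 1) (p (s.1 + 1) - p s.1 - 1) (j s)) :
    (FsOf n (p s.1) (p (s.1 + 1)) (j s)).length = p (s.1 + 1) - p s.1 - 1 := by
  rw [FsOf, length_rems, hjs.1]

lemma FsOf_nodup {s : Fin k} (hbn : p (s.1 + 1) ≤ n)
    (hjs : memS (p (s.1 + 1) - p s.1 - 1) (p (s.1 + 1) - p s.1 - 1) (j s)) :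
    (FsOf n (p s.1) (p (s.1 + 1)) (j s)).Nodup :=
  nodup_rems ((List.nodup_range).filter _) (FsOf_valid hbn hjs)

lemma FsOf_subset {s : Fin k} (hbn : p (s.1 + 1) ≤ n)
    (hjs : memS (p (s.1 + 1) - p s.1 - 1) (p (s.1 + 1) - p s.1 - 1) (j s)) :
    ∀ y ∈ FsOf n (p s.1) (p (s.1 + 1)) (j s),
      y ∈ (List.range (n + 1)).filter (fun y => decide (p s.1 < y ∧ y < p (s.1 + 1))) :=
  rems_subset _ (FsOf_valid hbn hjs)

lemma FsOf_mem_iff {s : Fin k} (hbn : p (s.1 + 1) ≤ n)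
    (hjs : memS (p (s.1 + 1) - p s.1 - 1) (p (s.1 + 1) - p s.1 - 1) (j s)) :
    ∀ y, y ∈ FsOf n (p s.1) (p (s.1 + 1)) (j s) ↔
      y ∈ (List.range (n + 1)).filter (fun y => decide (p s.1 < y ∧ y < p (s.1 + 1))) := by
  have h1 : (FsOf n (p s.1) (p (s.1 + 1)) (j s)).toFinset ⊆
      ((List.range (n + 1)).filter
        (fun y => decide (p s.1 < y ∧ y < p (s.1 + 1)))).toFinset := by
    intro x hx
    rw [List.mem_toFinset] at hx ⊢
    exact FsOf_subset hbn hjs x hx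
  have h2 : (FsOf n (p s.1) (p (s.1 + 1)) (j s)).toFinset =
      ((List.range (n + 1)).filter
        (fun y => decide (p s.1 < y ∧ y < p (s.1 + 1)))).toFinset := by
    apply Finset.eq_of_subset_of_card_le h1
    rw [List.toFinset_card_of_nodup (FsOf_nodup hbn hjs),
      List.toFinset_card_of_nodup ((List.nodup_range).filter _),
      FsOf_length hjs, interval_length hbn]
  intro y
  rw [← List.mem_toFinset, h2, List.mem_toFinset]

lemma psi_surj (hk1 : 1 ≤ k) (hkn : k ≤ n) (hl : l = n - k)
    (hp0 : p 0 = 0) (hpk : p k = n) (hmono : ∀ s < k, p s < p (s + 1))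
    (hα : IsShuffleF (fun s : Fin k => p (s.1 + 1) - p s.1 - 1) α)
    (hj : ∀ s : Fin k, memS (p (s.1 + 1) - p s.1 - 1) (p (s.1 + 1) - p s.1 - 1) (j s)) :
    ∃ i : List ℕ, (memS (n - 1) l i ∧ restList n i = (List.range (k + 1)).map p) ∧
      (∀ s : Fin k, psiAlpha n i (p s.1) (p (s.1 + 1)) = α s) ∧
      (∀ s : Fin k, psiJ n i (p s.1) (p (s.1 + 1)) = j s) := by
  obtain ⟨hcard, hdisj, hcover⟩ := hα
  have hL : (List.range (n + 1)).Nodup := List.nodup_range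
  have hbn : ∀ s : Fin k, p (s.1 + 1) ≤ n := fun s => by
    calc p (s.1 + 1) ≤ p k := p_mono hmono (by omega) (le_refl _)
    _ = n := hpk
  have hsum : ∑ s : Fin k, (p (s.1 + 1) - p s.1 - 1) = l := by
    rw [Fin.sum_univ_eq_sum_range (fun s => p (s + 1) - p s - 1) k,
      p_sum hp0 hmono (le_refl k), hpk, hl]
  have hαsub : ∀ s : Fin k, α s ⊆ Finset.range l := by
    intro s x hx
    have hx2 : x ∈ Finset.univ.biUnion α := Finset.mem_biUnion.2 ⟨s, Finset.mem_univ s, hx⟩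
    rw [hcover, hsum] at hx2
    exact hx2
  have hcov : ∀ r, r < l → ∃ s : Fin k, r ∈ α s := by
    intro r hr
    have hx2 : r ∈ Finset.univ.biUnion α := by
      rw [hcover, hsum]
      exact Finset.mem_range.2 hr
    obtain ⟨s, _, hs⟩ := Finset.mem_biUnion.1 hx2
    exact ⟨s, hs⟩
  have hsteps_len : ∀ s : Fin k, (stepsOf l (α s)).length = p (s.1 + 1) - p s.1 - 1 := by
    intro s
    rw [stepsOf_length (hαsub s), hcard s]
  have hglem : ∀ (s : Fin k) (r : ℕ), r ∈ α s →
      gOf n k l p α j r ∈ FsOf n (p s.1) (p (s.1 + 1)) (j s) := by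
    intro s r hr
    rw [gOf_eq hdisj hr]
    have hidx : (stepsOf l (α s)).idxOf r < (stepsOf l (α s)).length :=
      List.idxOf_lt_length_iff.2 ((mem_stepsOf (hαsub s)).2 hr)
    have hidx2 : (stepsOf l (α s)).idxOf r <
        (FsOf n (p s.1) (p (s.1 + 1)) (j s)).length := by
      rw [FsOf_length (hj s)]
      rw [hsteps_len s] at hidx
      exact hidx
    rw [List.getD_eq_getElem _ _ hidx2]
    exact List.getElem_mem _
  have hgbounds : ∀ (s : Fin k) (r : ℕ), r ∈ α s →
      p s.1 < gOf n k l p α j r ∧ gOf n k l p α j r < p (s.1 + 1) ∧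
        gOf n k l p α j r < n + 1 := by
    intro s r hr
    have hm := FsOf_subset (hbn s) (hj s) _ (hglem s r hr)
    rw [List.mem_filter, List.mem_range] at hm
    have h2 := hm.2
    simp only [decide_eq_true_eq] at h2
    exact ⟨h2.1, h2.2, hm.1⟩
  have hgInj : ∀ r, r < l → ∀ r', r' < l →
      gOf n k l p α j r = gOf n k l p α j r' → r = r' := by
    intro r hr r' hr' heq
    obtain ⟨s, hs⟩ := hcov r hr
    obtain ⟨s', hs'⟩ := hcov r' hr'
    have hss : s = s' := by
      apply Fin.ext
      exact int_disj hmono s.2 s'.2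
        ⟨(hgbounds s r hs).1, (hgbounds s r hs).2.1⟩
        (heq ▸ ⟨(hgbounds s' r' hs').1, (hgbounds s' r' hs').2.1⟩)
    subst hss
    rw [gOf_eq hdisj hs, gOf_eq hdisj hs'] at heq
    have hi1 : (stepsOf l (α s)).idxOf r < (stepsOf l (α s)).length :=
      List.idxOf_lt_length_iff.2 ((mem_stepsOf (hαsub s)).2 hs)
    have hi2 : (stepsOf l (α s)).idxOf r' < (stepsOf l (α s)).length :=
      List.idxOf_lt_length_iff.2 ((mem_stepsOf (hαsub s)).2 hs')
    have hlen : (stepsOf l (α s)).length =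
        (FsOf n (p s.1) (p (s.1 + 1)) (j s)).length := by
      rw [FsOf_length (hj s), hsteps_len s]
    have hFnod := FsOf_nodup (hbn s) (hj s)
    rw [List.getD_eq_getElem _ _ (hlen ▸ hi1), List.getD_eq_getElem _ _ (hlen ▸ hi2)] at heq
    have hieq : (stepsOf l (α s)).idxOf r = (stepsOf l (α s)).idxOf r' := by
      by_contra hne
      rcases lt_or_gt_of_ne hne with h | h
      · exact (List.pairwise_iff_getElem.1 hFnod _ _ (hlen ▸ hi1) (hlen ▸ hi2) h) heq
      · exact (List.pairwise_iff_getElem.1 hFnod _ _ (hlen ▸ hi2) (hlen ▸ hi1) h) heq.symm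
    have g1 : (stepsOf l (α s))[(stepsOf l (α s)).idxOf r]'hi1 = r :=
      List.getElem_idxOf hi1
    have g2 : (stepsOf l (α s))[(stepsOf l (α s)).idxOf r']'hi2 = r' :=
      List.getElem_idxOf hi2
    rw [← g1, ← g2]
    exact getElem_congr_idx (c := stepsOf l (α s)) (w := hi1) hieq
  -- the removed-element list
  have hEget : ∀ r, ∀ hr : r < l, ((List.range l).map (gOf n k l p α j))[r]'(by simpa using hr)
      = gOf n k l p α j r := by
    intro r hr
    rw [List.getElem_map, List.getElem_range]
  have hEnod : ((List.range l).map (gOf n k l p α j)).Nodup := by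
    rw [List.Nodup, List.pairwise_iff_getElem]
    intro a b ha hb hab
    have ha' : a < l := by simpa using ha
    have hb' : b < l := by simpa using hb
    rw [hEget a ha', hEget b hb']
    intro heq
    exact absurd (hgInj a ha' b hb' heq) (by omega)
  have hEsub : ∀ y ∈ (List.range l).map (gOf n k l p α j), y ∈ List.range (n + 1) := by
    intro y hy
    obtain ⟨r, hr, rfl⟩ := List.mem_map.1 hy
    rw [List.mem_range] at hr
    obtain ⟨s, hs⟩ := hcov r hr
    exact List.mem_range.2 (hgbounds s r hs).2.2
  have hEpos : ∀ y ∈ (List.range l).map (gOf n k l p α j), 0 < y ∧ y < n := by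
    intro y hy
    obtain ⟨r, hr, rfl⟩ := List.mem_map.1 hy
    rw [List.mem_range] at hr
    obtain ⟨s, hs⟩ := hcov r hr
    have h1 := hgbounds s r hs
    have h2 := hbn s
    omega
  have hEnotp : ∀ y ∈ (List.range l).map (gOf n k l p α j), ∀ t, t ≤ k → p t ≠ y := by
    intro y hy t htk
    obtain ⟨r, hr, rfl⟩ := List.mem_map.1 hy
    rw [List.mem_range] at hr
    obtain ⟨s, hs⟩ := hcov r hr
    have h1 := hgbounds s r hs
    rcases le_or_gt t s.1 with h | h
    · have := p_mono hmono h (by have := s.2; omega)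
      omega
    · have := p_mono hmono (show s.1 + 1 ≤ t by omega) htk
      omega
  have hvc := validCode_codeOf hL hEnod hEsub
  have hremsE := rems_codeOf hL hEnod hEsub
  have hclen : (codeOf (List.range (n + 1)) ((List.range l).map (gOf n k l p α j))).length
      = l := by
    rw [length_codeOf]
    simp
  have hbds : ∀ r, r < l →
      1 ≤ (codeOf (List.range (n + 1)) ((List.range l).map (gOf n k l p α j))).getD r 0 ∧
      (codeOf (List.range (n + 1)) ((List.range l).map (gOf n k l p α j))).getD r 0 + r + 2
        ≤ n + 1 := by
    intro r hr
    exact codeOf_bounds hEnod hEsub hEpos (by simpa using hr)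
  set i0 : List ℕ := (codeOf (List.range (n + 1))
    ((List.range l).map (gOf n k l p α j))).map (fun x => x - 1) with hi0def
  have hilen : i0.length = l := by
    rw [hi0def, List.length_map, hclen]
  have hmapback : i0.map (· + 1) =
      codeOf (List.range (n + 1)) ((List.range l).map (gOf n k l p α j)) := by
    apply List.ext_getElem (by rw [List.length_map, hilen, hclen])
    intro t h1 h2
    have htl : t < l := by rwa [hclen] at h2
    have hb := hbds t htl
    rw [List.getD_eq_getElem _ _ h2] at hb
    rw [List.getElem_map, List.getElem_of_eq hi0def, List.getElem_map]
    omega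
  have hiv : ValidCode (List.range (n + 1)) (i0.map (· + 1)) := by
    rw [hmapback]; exact hvc
  have hremsE' : rems (List.range (n + 1)) (i0.map (· + 1)) =
      (List.range l).map (gOf n k l p α j) := by
    rw [hmapback]; exact hremsE
  have hmemS : memS (n - 1) l i0 := by
    refine ⟨hilen, ?_⟩
    intro t ht
    have h2 : t < (codeOf (List.range (n + 1))
        ((List.range l).map (gOf n k l p α j))).length := by rwa [hclen]
    have hb := hbds t ht
    have : i0.getD t 0 = (codeOf (List.range (n + 1))
        ((List.range l).map (gOf n k l p α j))).getD t 0 - 1 := by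
      rw [List.getD_eq_getElem _ _ (by rwa [hilen]), List.getD_eq_getElem _ _ h2,
        List.getElem_of_eq hi0def, List.getElem_map]
    omega
  have helem : ∀ r, r < l → elemRemoved n i0 r = gOf n k l p α j r := by
    intro r hr
    have hb : r < (rems (List.range (n + 1)) (i0.map (· + 1))).length := by
      rw [length_rems, List.length_map, hilen]; exact hr
    rw [elemRemoved_eq (by rwa [hilen]), ← rems_getElem _ _ hb,
      List.getElem_of_eq hremsE', hEget r hr]
  have hFE : ∀ (s : Fin k), ∀ y ∈ FsOf n (p s.1) (p (s.1 + 1)) (j s),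
      y ∈ (List.range l).map (gOf n k l p α j) := by
    intro s y hy
    obtain ⟨u, hu, rfl⟩ := List.mem_iff_getElem.1 hy
    have hu2 : u < (stepsOf l (α s)).length := by
      rw [hsteps_len s]
      rw [FsOf_length (hj s)] at hu
      exact hu
    have hrα : (stepsOf l (α s))[u] ∈ α s :=
      (mem_stepsOf (hαsub s)).1 (List.getElem_mem hu2)
    have hrl : (stepsOf l (α s))[u] < l :=
      Finset.mem_range.1 (hαsub s hrα)
    refine List.mem_map.2 ⟨(stepsOf l (α s))[u], List.mem_range.2 hrl, ?_⟩
    rw [gOf_eq hdisj hrα, List.Nodup.idxOf_getElem (stepsOf_sorted l (α s)).nodup,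
      List.getD_eq_getElem _ _ hu]
  have hrest : restList n i0 = (List.range (k + 1)).map p := by
    rw [restList_eq_filter hiv, hremsE']
    apply sorted_eq_of_mem_iff
    · exact List.Pairwise.sublist (List.filter_sublist) List.pairwise_lt_range
    · exact sorted_map_p hmono
    · intro y
      rw [List.mem_filter, List.mem_range]
      simp only [decide_eq_true_eq]
      constructor
      · rintro ⟨hyn, hyE⟩
        by_contra hc
        obtain ⟨s, hsk, h1, h2⟩ := p_gap hp0 hpk hmono (show y ≤ n by omega)
          (fun t ht hpt => hc (List.mem_map.2 ⟨t, List.mem_range.2 (by omega), hpt⟩))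
        apply hyE
        apply hFE ⟨s, hsk⟩
        rw [FsOf_mem_iff (hbn ⟨s, hsk⟩) (hj ⟨s, hsk⟩), List.mem_filter]
        exact ⟨List.mem_range.2 hyn, by simp; exact ⟨h1, h2⟩⟩
      · intro hmem
        obtain ⟨t, ht, rfl⟩ := List.mem_map.1 hmem
        rw [List.mem_range] at ht
        have h1 : p t ≤ n := by
          calc p t ≤ p k := p_mono hmono (by omega) (le_refl _)
          _ = n := hpk
        refine ⟨by omega, ?_⟩
        intro hmem2
        exact hEnotp _ hmem2 t (by omega) rfl
  have hEfil : ∀ s : Fin k, ((List.range l).map (gOf n k l p α j)).filter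
      (fun y => decide (p s.1 < y ∧ y < p (s.1 + 1))) =
      FsOf n (p s.1) (p (s.1 + 1)) (j s) := by
    intro s
    rw [List.filter_map]
    have h1 : (List.range l).filter
        ((fun y => decide (p s.1 < y ∧ y < p (s.1 + 1))) ∘ gOf n k l p α j) =
        stepsOf l (α s) := by
      rw [stepsOf]
      apply List.filter_congr
      intro r hr
      rw [List.mem_range] at hr
      show decide (p s.1 < gOf n k l p α j r ∧ gOf n k l p α j r < p (s.1 + 1)) = _
      rw [decide_eq_decide]
      constructor
      · intro hb
        obtain ⟨t, ht⟩ := hcov r hr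
        have hbt := hgbounds t r ht
        have hts : t = s := Fin.ext (int_disj hmono t.2 s.2 ⟨hbt.1, hbt.2.1⟩ hb)
        rwa [hts] at ht
      · intro hα'
        exact ⟨(hgbounds s r hα').1, (hgbounds s r hα').2.1⟩
    rw [h1]
    apply List.ext_getElem
    · rw [List.length_map, hsteps_len s, FsOf_length (hj s)]
    · intro u h1' h2'
      rw [List.getElem_map]
      have hu2 : u < (stepsOf l (α s)).length := by simpa using h1'
      have hrα : (stepsOf l (α s))[u] ∈ α s :=
        (mem_stepsOf (hαsub s)).1 (List.getElem_mem hu2)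
      rw [gOf_eq hdisj hrα, List.Nodup.idxOf_getElem (stepsOf_sorted l (α s)).nodup,
        List.getD_eq_getElem _ _ h2']
  refine ⟨i0, ⟨hmemS, hrest⟩, ?_, ?_⟩
  · intro s
    ext r
    rw [psiAlpha_mem]
    constructor
    · rintro ⟨hrlen, hb1, hb2⟩
      have hrl : r < l := by rwa [hilen] at hrlen
      rw [helem r hrl] at hb1 hb2
      obtain ⟨t, ht⟩ := hcov r hrl
      have hbt := hgbounds t r ht
      have hts : t = s := Fin.ext (int_disj hmono t.2 s.2 ⟨hbt.1, hbt.2.1⟩ ⟨hb1, hb2⟩)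
      rwa [hts] at ht
    · intro hr
      have hrl : r < l := Finset.mem_range.1 (hαsub s hr)
      refine ⟨by rwa [hilen], ?_⟩
      rw [helem r hrl]
      exact ⟨(hgbounds s r hr).1, (hgbounds s r hr).2.1⟩
  · intro s
    rw [psiJ_eq_codeOf hiv (hmono s.1 s.2) (hbn s), hremsE', hEfil s]
    exact codeOf_rems ((List.nodup_range).filter _) (FsOf_valid (hbn s) (hj s))

end Surj

end SzczAux

/-- For `1 ≤ k ≤ n`, `l = n - k` and
`p = (0 = p_0 < p_1 < ⋯ < p_k = n)` with `q_s = p_s - p_{s-1}`, the map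
`Ψ_p : S_{n-1}(p) → Shuff(q_1 - 1, …, q_k - 1) × S_{q_1-1} × ⋯ × S_{q_k-1}`
is a bijection. -/
theorem szczarba_psi_bijective (n k l : ℕ) (hk1 : 1 ≤ k) (hkn : k ≤ n) (hl : l = n - k)
    (p : ℕ → ℕ) (hp0 : p 0 = 0) (hpk : p k = n) (hmono : ∀ s < k, p s < p (s + 1)) :
    ∃ Ψ : {i : List ℕ // memS (n - 1) l i ∧ restList n i = (List.range (k + 1)).map p} →
        {α : Fin k → Finset ℕ // IsShuffleF (fun s => p (s.1 + 1) - p s.1 - 1) α} ×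
        (∀ s : Fin k, {j : List ℕ //
          memS (p (s.1 + 1) - p s.1 - 1) (p (s.1 + 1) - p s.1 - 1) j}),
      Function.Bijective Ψ ∧
      ∀ i, ((Ψ i).1.1 = fun s : Fin k => psiAlpha n i.1 (p s.1) (p (s.1 + 1))) ∧
        ∀ s : Fin k, ((Ψ i).2 s).1 = psiJ n i.1 (p s.1) (p (s.1 + 1)) := by
  classical
  refine ⟨fun i => (⟨fun s : Fin k => psiAlpha n i.1 (p s.1) (p (s.1 + 1)),
      SzczAux.psiAlpha_shuffle hk1 hkn hl hp0 hpk hmono i.2.1 i.2.2⟩,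
    fun s : Fin k => ⟨psiJ n i.1 (p s.1) (p (s.1 + 1)),
      SzczAux.psiJ_memS hpk hmono i.2.1 i.2.2 s.2⟩), ⟨?_, ?_⟩,
    fun i => ⟨rfl, fun s => rfl⟩⟩
  · intro i i' h
    apply Subtype.ext
    have hA : ∀ s : Fin k, psiAlpha n i.1 (p s.1) (p (s.1 + 1)) =
        psiAlpha n i'.1 (p s.1) (p (s.1 + 1)) := by
      intro s
      exact congrFun (congrArg (fun x => (x.1.1 : Fin k → Finset ℕ)) h) s
    have hJ : ∀ s : Fin k, psiJ n i.1 (p s.1) (p (s.1 + 1)) =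
        psiJ n i'.1 (p s.1) (p (s.1 + 1)) := by
      intro s
      exact congrArg (fun x => (x.2 s).1) h
    exact SzczAux.psi_inj hk1 hkn hl hp0 hpk hmono i.2.1 i.2.2 i'.2.1 i'.2.2 hA hJ
  · rintro ⟨⟨α, hα⟩, j⟩
    obtain ⟨i0, ⟨h1, h2⟩, h3, h4⟩ := SzczAux.psi_surj hk1 hkn hl hp0 hpk hmono hα
      (fun s => (j s).2)
    refine ⟨⟨i0, h1, h2⟩, ?_⟩
    refine Prod.ext ?_ ?_
    · exact Subtype.ext (funext fun s => h3 s)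
    · funext s
      exact Subtype.ext (h4 s)
end

section
/- Let 1 ≤ k ≤ n, l = n − k, and let p = (0 = p_0 < p_1 < ⋯ < p_k = n) with q_s = p_s − p_{s−1}. If i ∈ S_{n−1}(p) and Ψ_p(i) = (α, j_1, …, j_k), then deg i ≡ (α) + Σ_{s=1}^{k} deg j_s + Σ_{s=1}^{k} (s−1)(q_s−1) (mod 2). -/
/-!
At step `r` the removed element `e_r` sits at position `i_r + 1` of the remaining set, so
`i_r + 1` is the number of remaining elements below `e_r`. If `e_r` lies in the `s`-th interval
`(p_s, p_{s+1})` (counting from `0`), these are `p_0, …, p_s`, the elements of the intervals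
`t < s` that are removed later (the elements `b > r` of `α_t`), and the remaining elements of
`(p_s, e_r)`, whose number is the entry of `j_s` recorded at step `r`. Summing over `r` gives
`deg i = (α) + Σ_s deg j_s + Σ_s s (q_s - 1)` as an identity of natural numbers.
-/

open Finset

theorem List.sum_eq_sum_range_getD {M : Type*} [AddCommMonoid M] (l : List M) :
    l.sum = ∑ r ∈ Finset.range l.length, l.getD r 0 := by
  rw [← Fin.sum_univ_eq_sum_range, ← Fin.sum_univ_getElem]
  simp

theorem List.Pairwise.countP_lt_getElem {α : Type*} [LinearOrder α] :
    ∀ {l : List α}, l.Pairwise (· < ·) → ∀ (m : ℕ) (hm : m < l.length),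
      l.countP (· < l[m]) = m
  | a :: l, h, 0, _ => by
    rw [List.pairwise_cons] at h
    simpa [List.countP_cons, List.countP_eq_zero] using fun b hb => (h.1 b hb).le
  | a :: l, h, m + 1, hm => by
    rw [List.pairwise_cons] at h
    simp [h.1 _ (List.getElem_mem _), h.2.countP_lt_getElem m]

theorem List.countP_lt_eq_add_count_add {c e : ℕ} (hce : c < e) (l : List ℕ) :
    l.countP (· < e) = l.countP (· < c) + l.count c + l.countP (fun y => c < y ∧ y < e) := by
  induction l with
  | nil => rfl
  | cons a l ih =>
    simp only [List.countP_cons, List.count_cons, ih, decide_eq_true_eq, beq_iff_eq]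
    split_ifs <;> omega

theorem List.countP_lt_eq_add_sum_countP {L : List ℕ} (hL : L.Nodup) {p : ℕ → ℕ}
    (hp0 : p 0 = 0) :
    ∀ {s : ℕ}, (∀ t < s, p t < p (t + 1)) → (∀ t ≤ s, p t ∈ L) →
      ∀ {e : ℕ}, p s < e → L.countP (· < e) =
        s + 1 + ∑ t ∈ Finset.range s, L.countP (fun y => p t < y ∧ y < p (t + 1))
          + L.countP (fun y => p s < y ∧ y < e)
  | 0, _, hmem, _, he => by
    rw [countP_lt_eq_add_count_add he, count_eq_one_of_mem hL (hmem 0 le_rfl), hp0]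
    simp
  | s + 1, hmono, hmem, _, he => by
    rw [countP_lt_eq_add_count_add he, count_eq_one_of_mem hL (hmem (s + 1) le_rfl),
      countP_lt_eq_add_sum_countP hL hp0 (fun t ht => hmono t (by omega))
        (fun t ht => hmem t (by omega))
        (hmono s (by omega)), Finset.sum_range_succ]
    omega

theorem List.countP_range_Ioo (a b : ℕ) :
    ∀ m, (List.range m).countP (fun y => a < y ∧ y < b) = min m b - a - 1
  | 0 => by simp
  | m + 1 => by
    rw [List.range_succ, List.countP_append, countP_range_Ioo a b m, List.countP_singleton]
    by_cases h1 : a < m <;> by_cases h2 : m < b <;> simp [h1, h2] <;> omega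

theorem memS_of_memS_sub_one {n l : ℕ} {i : List ℕ} (hi : memS (n - 1) l i) :
    memS n i.length i := by
  obtain ⟨rfl, h⟩ := hi
  exact ⟨rfl, fun t ht => (h t ht).trans (Nat.sub_le n 1)⟩

section Removal

variable {n : ℕ} {i : List ℕ}

theorem restAfter_succ {r : ℕ} (hr : r < i.length) :
    restAfter n i (r + 1) = (restAfter n i r).eraseIdx (i.getD r 0 + 1) := by
  rw [restAfter, List.take_add_one, List.getElem?_eq_getElem hr, List.foldl_append]
  simp [List.getD, List.getElem?_eq_getElem hr, restAfter]

theorem restAfter_succ_sublist (r : ℕ) :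
    List.Sublist (restAfter n i (r + 1)) (restAfter n i r) := by
  rcases lt_or_ge r i.length with hr | hr
  · rw [restAfter_succ hr]
    exact List.eraseIdx_sublist _ _
  · simp [restAfter, List.take_of_length_le, hr, Nat.le_succ_of_le hr]

theorem restAfter_sublist {r r' : ℕ} (h : r ≤ r') :
    List.Sublist (restAfter n i r') (restAfter n i r) := by
  induction h with
  | refl => exact List.Sublist.refl _
  | step _ ih => exact (restAfter_succ_sublist _).trans ih

theorem restAfter_pairwise_lt (r : ℕ) : (restAfter n i r).Pairwise (· < ·) :=
  List.pairwise_lt_range.sublist (restAfter_sublist (Nat.zero_le r))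

theorem restAfter_nodup (r : ℕ) : (restAfter n i r).Nodup :=
  (restAfter_pairwise_lt r).nodup

theorem length_restAfter (hi : memS n i.length i) :
    ∀ {r : ℕ}, r ≤ i.length → (restAfter n i r).length = n + 1 - r
  | 0, _ => by simp [restAfter]
  | r + 1, hr => by
    have := hi.2 r hr
    rw [restAfter_succ hr, List.length_eraseIdx_of_lt] <;>
      rw [length_restAfter hi (Nat.le_of_succ_le hr)] <;> omega

theorem getD_add_one_lt_length_restAfter (hi : memS n i.length i) {r : ℕ}
    (hr : r < i.length) : i.getD r 0 + 1 < (restAfter n i r).length := by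
  have := hi.2 r hr
  rw [length_restAfter hi (Nat.le_of_succ_le hr)]
  omega

theorem elemRemoved_eq_getElem (hi : memS n i.length i) {r : ℕ} (hr : r < i.length) :
    elemRemoved n i r =
      (restAfter n i r)[i.getD r 0 + 1]'(getD_add_one_lt_length_restAfter hi hr) :=
  List.getD_eq_getElem _ _ _

theorem elemRemoved_mem_restAfter (hi : memS n i.length i) {r : ℕ} (hr : r < i.length) :
    elemRemoved n i r ∈ restAfter n i r := by
  rw [elemRemoved_eq_getElem hi hr]
  exact List.getElem_mem _

theorem restAfter_succ_eq_erase (hi : memS n i.length i) {r : ℕ} (hr : r < i.length) :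
    restAfter n i (r + 1) = (restAfter n i r).erase (elemRemoved n i r) := by
  rw [restAfter_succ hr, elemRemoved_eq_getElem hi hr, (restAfter_nodup r).erase_getElem]

theorem elemRemoved_lt (hi : memS n i.length i) {r : ℕ} (hr : r < i.length) :
    elemRemoved n i r < n + 1 :=
  List.mem_range.1 ((restAfter_sublist (Nat.zero_le r)).subset (elemRemoved_mem_restAfter hi hr))

theorem elemRemoved_notMem_restList (hi : memS n i.length i) {r : ℕ} (hr : r < i.length) :
    elemRemoved n i r ∉ restList n i := fun h => by
  have h' := (restAfter_sublist (n := n) (i := i) hr).subset h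
  rw [restAfter_succ_eq_erase hi hr] at h'
  exact (restAfter_nodup r).not_mem_erase h'

theorem getD_add_one_eq_countP_lt (hi : memS n i.length i) {r : ℕ} (hr : r < i.length) :
    i.getD r 0 + 1 = (restAfter n i r).countP (· < elemRemoved n i r) := by
  rw [elemRemoved_eq_getElem hi hr, (restAfter_pairwise_lt r).countP_lt_getElem]

theorem countP_restAfter_succ (hi : memS n i.length i) (P : ℕ → Bool) {r : ℕ}
    (hr : r < i.length) :
    (restAfter n i r).countP P =
      (restAfter n i (r + 1)).countP P + if P (elemRemoved n i r) then 1 else 0 := by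
  rw [restAfter_succ_eq_erase hi hr,
    (List.perm_cons_erase (elemRemoved_mem_restAfter hi hr)).countP_eq P, List.countP_cons]

theorem countP_restAfter (hi : memS n i.length i) (P : ℕ → Prop) [DecidablePred P] {r : ℕ}
    (hr : r ≤ i.length) :
    (restAfter n i r).countP (fun y => P y) =
      (restList n i).countP (fun y => P y) + #{r' ∈ Ico r i.length | P (elemRemoved n i r')} := by
  induction hr using Nat.decreasingInduction with
  | self => simp [restList]
  | of_succ r hr ih =>
    rw [countP_restAfter_succ hi _ hr, ih, ← insert_Ico_add_one_left_eq_Ico hr, filter_insert]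
    by_cases h : P (elemRemoved n i r)
    · simp [h, card_insert_of_notMem]
      omega
    · simp [h]

end Removal

theorem exists_le_and_lt_succ {α : Type*} [LinearOrder α] {p : ℕ → α} {e : α} :
    ∀ {k : ℕ}, p 0 ≤ e → e < p k → ∃ s < k, p s ≤ e ∧ e < p (s + 1)
  | 0, h0, hk => absurd h0 hk.not_ge
  | k + 1, h0, hk => by
    rcases lt_or_ge e (p k) with h | h
    · obtain ⟨s, hs, hes⟩ := exists_le_and_lt_succ h0 h
      exact ⟨s, by omega, hes⟩
    · exact ⟨k, lt_add_one k, h, hk⟩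

theorem shuffleExpN_eq_sum (k : ℕ) (α : ℕ → Finset ℕ) :
    shuffleExpN k α =
      ∑ s ∈ range k, ∑ r ∈ α s, ∑ t ∈ range s, #{b ∈ α t | r < b} := by
  rw [shuffleExpN, sum_comm]
  refine sum_congr rfl fun s hs => ?_
  have hlt : {t ∈ range k | t < s} = range s := by
    ext
    simp only [mem_filter, mem_range] at hs ⊢
    omega
  rw [← sum_filter, hlt, sum_comm]
  exact sum_congr rfl fun t _ => sum_card_bipartiteAbove_eq_sum_card_bipartiteBelow (· > ·)

section Partition

variable {n k : ℕ} {p : ℕ → ℕ} {i : List ℕ}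

theorem mem_psiAlpha {a b r : ℕ} :
    r ∈ psiAlpha n i a b ↔
      r < i.length ∧ a < elemRemoved n i r ∧ elemRemoved n i r < b := by
  simp [psiAlpha]

theorem sum_psiJ (a b : ℕ) :
    (psiJ n i a b).sum = ∑ r ∈ psiAlpha n i a b,
      ((restAfter n i r).filter (fun y => a < y ∧ y < elemRemoved n i r)).length :=
  rfl

theorem apply_mem_restAfter (hrest : restList n i = (List.range (k + 1)).map p) {t r : ℕ}
    (ht : t ≤ k) (hr : r ≤ i.length) : p t ∈ restAfter n i r := by
  refine (restAfter_sublist hr).subset (?_ : p t ∈ restList n i)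
  rw [hrest]
  exact List.mem_map_of_mem (List.mem_range.2 (by omega))

theorem countP_restList_eq_zero (hp : StrictMonoOn p (Set.Iic k))
    (hrest : restList n i = (List.range (k + 1)).map p) {t : ℕ} (ht : t < k) :
    (restList n i).countP (fun y => p t < y ∧ y < p (t + 1)) = 0 := by
  rw [hrest, List.countP_map, List.countP_eq_zero]
  intro j hj
  have hj : j ≤ k := by simp at hj; omega
  simp only [Function.comp_apply, decide_eq_true_eq, not_and, not_lt]
  intro h
  have := (hp.lt_iff_lt (by simp; omega) hj).1 h
  exact (hp.le_iff_le (by simp; omega) hj).2 this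

theorem exists_mem_psiAlpha (hi : memS n i.length i) (hp0 : p 0 = 0) (hpk : p k = n)
    (hrest : restList n i = (List.range (k + 1)).map p) {r : ℕ} (hr : r < i.length) :
    ∃ s < k, r ∈ psiAlpha n i (p s) (p (s + 1)) := by
  have hne : ∀ t ≤ k, elemRemoved n i r ≠ p t := fun t ht h =>
    elemRemoved_notMem_restList hi hr (h ▸ apply_mem_restAfter hrest ht le_rfl)
  have hlt : elemRemoved n i r < p k :=
    lt_of_le_of_ne (by have := elemRemoved_lt hi hr; omega) (hne k le_rfl)
  obtain ⟨s, hs, h1, h2⟩ := exists_le_and_lt_succ (by omega) hlt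
  exact ⟨s, hs, mem_psiAlpha.2 ⟨hr, lt_of_le_of_ne h1 (hne s hs.le).symm, h2⟩⟩

theorem disjoint_psiAlpha (hp : StrictMonoOn p (Set.Iic k)) {s t : ℕ} (hs : s < k) (ht : t < k)
    (hst : s ≠ t) :
    Disjoint (psiAlpha n i (p s) (p (s + 1))) (psiAlpha n i (p t) (p (t + 1))) := by
  have key : ∀ {s t}, s < t → t < k → p (s + 1) ≤ p t := fun {s t} hst ht =>
    hp.monotoneOn (by simp; omega) (by simp; omega) (by omega)
  rw [disjoint_left]
  intro r hrs hrt
  rw [mem_psiAlpha] at hrs hrt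
  rcases hst.lt_or_gt with h | h
  · have := key h ht; omega
  · have := key h hs; omega

theorem sum_range_length_eq_sum_psiAlpha {M : Type*} [AddCommMonoid M] (f : ℕ → M)
    (hi : memS n i.length i) (hp0 : p 0 = 0) (hpk : p k = n) (hp : StrictMonoOn p (Set.Iic k))
    (hrest : restList n i = (List.range (k + 1)).map p) :
    ∑ r ∈ range i.length, f r =
      ∑ s ∈ range k, ∑ r ∈ psiAlpha n i (p s) (p (s + 1)), f r := by
  have hunion : (range k).biUnion (fun s => psiAlpha n i (p s) (p (s + 1))) = range i.length := by
    ext r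
    simp only [mem_biUnion, mem_range]
    exact ⟨fun ⟨_, _, hr⟩ => (mem_psiAlpha.1 hr).1, exists_mem_psiAlpha hi hp0 hpk hrest⟩
  rw [← hunion, sum_biUnion]
  exact fun s hs t ht hst => disjoint_psiAlpha hp (by simpa using hs) (by simpa using ht) hst

theorem card_psiAlpha (hi : memS n i.length i) (hpk : p k = n) (hp : StrictMonoOn p (Set.Iic k))
    (hrest : restList n i = (List.range (k + 1)).map p) {s : ℕ} (hs : s < k) :
    #(psiAlpha n i (p s) (p (s + 1))) = p (s + 1) - p s - 1 := by
  have h := countP_restAfter hi (fun y => p s < y ∧ y < p (s + 1)) (Nat.zero_le _)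
  rw [countP_restList_eq_zero hp hrest hs, ← range_eq_Ico] at h
  have hle : p (s + 1) ≤ n := hpk ▸ hp.monotoneOn (by simp; omega) (by simp) (by omega)
  simp only [restAfter, List.take_zero, List.foldl_nil, List.countP_range_Ioo, zero_add] at h
  rw [psiAlpha, ← h]
  omega

theorem countP_restAfter_eq_card_filter (hi : memS n i.length i)
    (hp : StrictMonoOn p (Set.Iic k)) (hrest : restList n i = (List.range (k + 1)).map p)
    {t r : ℕ} (ht : t < k) (hr : r ≤ i.length) (hrt : r ∉ psiAlpha n i (p t) (p (t + 1))) :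
    (restAfter n i r).countP (fun y => p t < y ∧ y < p (t + 1)) =
      #{b ∈ psiAlpha n i (p t) (p (t + 1)) | r < b} := by
  rw [countP_restAfter hi _ hr, countP_restList_eq_zero hp hrest ht, zero_add]
  congr 1
  ext b
  simp only [mem_filter, mem_Ico, mem_psiAlpha] at hrt ⊢
  rcases eq_or_ne b r with rfl | hb
  · tauto
  · constructor <;> rintro ⟨⟨h1, h2⟩, h3⟩ <;> refine ⟨⟨?_, ?_⟩, ?_⟩ <;> omega

theorem getD_eq_of_mem_psiAlpha (hi : memS n i.length i) (hp0 : p 0 = 0)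
    (hmono : ∀ s < k, p s < p (s + 1)) (hp : StrictMonoOn p (Set.Iic k))
    (hrest : restList n i = (List.range (k + 1)).map p) {s r : ℕ} (hs : s < k)
    (hrs : r ∈ psiAlpha n i (p s) (p (s + 1))) :
    i.getD r 0 = s + ∑ t ∈ range s, #{b ∈ psiAlpha n i (p t) (p (t + 1)) | r < b}
      + ((restAfter n i r).filter (fun y => p s < y ∧ y < elemRemoved n i r)).length := by
  obtain ⟨hr, he, -⟩ := mem_psiAlpha.1 hrs
  have hcount := getD_add_one_eq_countP_lt hi hr
  rw [List.countP_lt_eq_add_sum_countP (restAfter_nodup r) hp0 (fun t ht => hmono t (by omega))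
    (fun t ht => apply_mem_restAfter hrest (by omega) hr.le) he] at hcount
  have hearlier : ∀ t ∈ range s, (restAfter n i r).countP (fun y => p t < y ∧ y < p (t + 1)) =
      #{b ∈ psiAlpha n i (p t) (p (t + 1)) | r < b} := fun t ht =>
    have ht : t < s := mem_range.1 ht
    countP_restAfter_eq_card_filter hi hp hrest (by omega) hr.le
      (disjoint_left.1 (disjoint_psiAlpha hp hs (by omega) (by omega)) hrs)
  rw [sum_congr rfl hearlier] at hcount
  rw [← List.countP_eq_length_filter]
  omega

end Partition

theorem szczarba_psi_degree_general (n k l : ℕ)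
    (p : ℕ → ℕ) (hp0 : p 0 = 0) (hpk : p k = n) (hmono : ∀ s < k, p s < p (s + 1))
    (i : List ℕ) (hi : memS (n - 1) l i)
    (hrest : restList n i = (List.range (k + 1)).map p) :
    Nat.ModEq 2 i.sum
      (shuffleExpN k (fun s => psiAlpha n i (p s) (p (s + 1)))
        + (∑ s ∈ Finset.range k, (psiJ n i (p s) (p (s + 1))).sum)
        + ∑ s ∈ Finset.range k, s * (p (s + 1) - p s - 1)) := by
  have hi : memS n i.length i := memS_of_memS_sub_one hi
  have hp : StrictMonoOn p (Set.Iic k) := strictMonoOn_Iic_of_lt_succ (by simpa using hmono)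
  rw [Nat.ModEq]
  congr 1
  calc i.sum = ∑ s ∈ range k, ∑ r ∈ psiAlpha n i (p s) (p (s + 1)), i.getD r 0 := by
        rw [i.sum_eq_sum_range_getD, sum_range_length_eq_sum_psiAlpha _ hi hp0 hpk hp hrest]
    _ = ∑ s ∈ range k, ∑ r ∈ psiAlpha n i (p s) (p (s + 1)),
          (s + ∑ t ∈ range s, #{b ∈ psiAlpha n i (p t) (p (t + 1)) | r < b}
            + ((restAfter n i r).filter (fun y => p s < y ∧ y < elemRemoved n i r)).length) :=
        sum_congr rfl fun s hs => sum_congr rfl fun r hr =>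
          getD_eq_of_mem_psiAlpha hi hp0 hmono hp hrest (mem_range.1 hs) hr
    _ = _ := by
      simp only [sum_add_distrib, sum_const, smul_eq_mul, ← sum_psiJ, ← shuffleExpN_eq_sum]
      rw [sum_congr rfl fun s hs => by
        rw [card_psiAlpha hi hpk hp hrest (mem_range.1 hs), mul_comm]]
      ring

/-- For `i ∈ S_{n-1}(p)` with `Ψ_p(i) = (α, j_1, …, j_k)` one has
`deg i ≡ (α) + Σ_s deg j_s + Σ_s (s-1)(q_s-1) (mod 2)`. -/
theorem szczarba_psi_degree (n k l : ℕ) (hk1 : 1 ≤ k) (hkn : k ≤ n) (hl : l = n - k)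
    (p : ℕ → ℕ) (hp0 : p 0 = 0) (hpk : p k = n) (hmono : ∀ s < k, p s < p (s + 1))
    (i : List ℕ) (hi : memS (n - 1) l i)
    (hrest : restList n i = (List.range (k + 1)).map p) :
    Nat.ModEq 2 i.sum
      (shuffleExpN k (fun s => psiAlpha n i (p s) (p (s + 1)))
        + (∑ s ∈ Finset.range k, (psiJ n i (p s) (p (s + 1))).sum)
        + ∑ s ∈ Finset.range k, s * (p (s + 1) - p s - 1)) :=
  szczarba_psi_degree_general n k l p hp0 hpk hmono i hi hrest
end

section
/- Let n ≥ 1, i ∈ S_n, p ∈ {0,…,n}, and set (j, q) = Φ(i, p). Then for every 0 ≤ k < p, every simplicial set X and every simplex x of X of dimension m ≥ n − k − 1, one has D_i^k (s_{p−1−k} x) = s_q (D_j^k x). -/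
open CategoryTheory

/-- Vertex map of the derived operator. -/
def derivedFun (f : ℕ → ℕ) : ℕ → ℕ := fun t => if t = 0 then 0 else f (t - 1) + 1

/-- Vertex map of the face map `δ_j`. -/
def deltaFun (j : ℕ) : ℕ → ℕ := fun t => if t < j then t else t + 1

/-- Vertex map of the degeneracy map `σ_j`. -/
def sigmaFun (j : ℕ) : ℕ → ℕ := fun t => if t ≤ j then t else t - 1

/-- Vertex map of the Szczarba operator `D_i^k`, defined by the recursion
`D_∅^0 = id`, `D_i^k = (D_{i'}^k)' s_0 ∂_{i_1 - k}` if `k < i_1`,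
`D_i^k = (D_{i'}^k)'` if `k = i_1`, and `D_i^k = (D_{i'}^{k-1})' s_0` if
`k > i_1`. -/
def DFun : List ℕ → ℕ → ℕ → ℕ
  | [], _ => id
  | (i1 :: i'), k =>
    if k < i1 then deltaFun (i1 - k) ∘ sigmaFun 0 ∘ derivedFun (DFun i' k)
    else if k = i1 then derivedFun (DFun i' k)
    else sigmaFun 0 ∘ derivedFun (DFun i' (k - 1))

/-- The morphism `[b] ⟶ [a]` in the simplex category whose vertex map is (the
monotone clamped version of) `f`.  When `f` is monotone and maps `[b]` into
`[a]`, this is exactly the morphism with vertex map `f`. -/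
def mkHomF (a b : ℕ) (f : ℕ → ℕ) : (SimplexCategory.mk b ⟶ SimplexCategory.mk a) :=
  SimplexCategory.mkHom
    { toFun := fun t => ⟨min ((Finset.range (t.1 + 1)).sup f) a,
        Nat.lt_succ_of_le (min_le_right _ _)⟩
      monotone' := fun u v huv => by
        simp only [Fin.mk_le_mk]
        exact min_le_min
          (Finset.sup_mono (Finset.range_subset_range.mpr (Nat.succ_le_succ huv))) le_rfl }

open Simplicial in
/-- The natural simplicial operator `X_a → X_b` corresponding to the vertex map
`f : [b] → [a]`. -/
def simpOp (X : SSet) (f : ℕ → ℕ) (a b : ℕ) (x : X _⦋a⦌) : X _⦋b⦌ :=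
  X.map (mkHomF a b f).op x

/-- The map `Φ : S_n × [n] → S_{n-1} × [n-1]`, `(i, p) ↦ (j, q)`. -/
def Phi : List ℕ → ℕ → List ℕ × ℕ
  | [], _ => ([], 0)
  | (i1 :: i'), p =>
    if p < i1 then ((i1 - 1) :: (Phi i' p).1, (Phi i' p).2 + 1)
    else if p = i1 ∨ p = i1 + 1 then (i', 0)
    else (i1 :: (Phi i' (p - 1)).1, (Phi i' (p - 1)).2 + 1)

/-!
Both sides are induced by vertex maps, so by functoriality of `X` it suffices to compare the
composite vertex maps `σ_{p-1-k} ∘ D_i^k` and `D_j^k ∘ σ_q`. These agree on all of `ℕ`, by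
induction on `i` along the recursion defining `Φ`: at `0` both vanish, and at `t + 1` each case
reduces, via the induction hypothesis, to one of the identities `σ_b δ_b = σ_b δ_{b+1} = id`,
`σ_a δ_{b+1} = δ_b σ_a` (`a < b`), `σ_{a+1} δ_b = δ_b σ_a` (`b ≤ a`) between vertex maps.
The only other input is that `D_i^k t = t - k` for `t ≥ n`, so that all the vertex maps involved
send `[m + k + 1]`, `[m + k]`, `[m + 1]` to the simplices they should.
-/

/-- `i ∈ S_n` with `n = i.length`, phrased recursively. -/
def IsAdmissible : List ℕ → Prop
  | [] => True
  | i1 :: i' => i1 ≤ i'.length ∧ IsAdmissible i'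

theorem isAdmissible_of_memS : ∀ {n : ℕ} {i : List ℕ}, memS n n i → IsAdmissible i
  | _, [], _ => trivial
  | n, i1 :: i', ⟨hlen, hle⟩ => by
    simp only [List.length_cons] at hlen
    have h0 := hle 0 (by omega)
    refine ⟨by simpa [← hlen] using h0, isAdmissible_of_memS (n := n - 1) ⟨by omega, ?_⟩⟩
    intro t ht
    have := hle (t + 1) (by omega)
    simp only [List.getD_cons_succ] at this
    omega

theorem sigmaFun_mono (j : ℕ) : Monotone (sigmaFun j) := by
  intro u v huv; simp only [sigmaFun]; split_ifs <;> omega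

theorem deltaFun_mono (j : ℕ) : Monotone (deltaFun j) := by
  intro u v huv; simp only [deltaFun]; split_ifs <;> omega

theorem derivedFun_mono {f : ℕ → ℕ} (hf : Monotone f) : Monotone (derivedFun f) := by
  intro u v huv; simp only [derivedFun]
  split_ifs
  · exact le_rfl
  · exact Nat.zero_le _
  · omega
  · exact Nat.succ_le_succ (hf (by omega))

theorem sigmaFun_mapsTo {j a : ℕ} (h : j ≤ a) :
    Set.MapsTo (sigmaFun j) (Set.Iic (a + 1)) (Set.Iic a) := by
  intro u (hu : u ≤ a + 1); simp only [Set.mem_Iic, sigmaFun]; split_ifs <;> omega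

theorem sigmaFun_zero (j : ℕ) : sigmaFun j 0 = 0 := rfl

theorem sigmaFun_zero_succ (t : ℕ) : sigmaFun 0 (t + 1) = t := rfl

theorem sigmaFun_succ_succ (a t : ℕ) : sigmaFun (a + 1) (t + 1) = sigmaFun a t + 1 := by
  simp only [sigmaFun]; split_ifs <;> omega

theorem sigmaFun_deltaFun_self (b t : ℕ) : sigmaFun b (deltaFun b t) = t := by
  simp only [sigmaFun, deltaFun]; split_ifs <;> omega

theorem sigmaFun_deltaFun_succ (b t : ℕ) : sigmaFun b (deltaFun (b + 1) t) = t := by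
  simp only [sigmaFun, deltaFun]; split_ifs <;> omega

theorem sigmaFun_deltaFun_of_lt {a b : ℕ} (h : a < b) (t : ℕ) :
    sigmaFun a (deltaFun (b + 1) t) = deltaFun b (sigmaFun a t) := by
  simp only [sigmaFun, deltaFun]; split_ifs <;> omega

theorem sigmaFun_deltaFun_of_le {a b : ℕ} (h : b ≤ a) (t : ℕ) :
    sigmaFun (a + 1) (deltaFun b t) = deltaFun b (sigmaFun a t) := by
  simp only [sigmaFun, deltaFun]; split_ifs <;> omega

section DFun

variable {i1 k t : ℕ} {i' : List ℕ}

theorem DFun_cons_succ_of_lt (h : k < i1) :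
    DFun (i1 :: i') k (t + 1) = deltaFun (i1 - k) (DFun i' k t) := by
  simp [DFun, h, derivedFun, sigmaFun]

theorem DFun_cons_succ_self : DFun (k :: i') k (t + 1) = DFun i' k t + 1 := by
  simp [DFun, derivedFun]

theorem DFun_cons_succ_of_gt (h : i1 < k) :
    DFun (i1 :: i') k (t + 1) = DFun i' (k - 1) t := by
  simp [DFun, h.not_gt, h.ne', derivedFun, sigmaFun]

theorem DFun_zero : ∀ (i : List ℕ) (k : ℕ), DFun i k 0 = 0
  | [], _ => rfl
  | i1 :: i', k => by
    simp only [DFun]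
    split_ifs with h
    · simp [derivedFun, sigmaFun, deltaFun, h]
    all_goals simp [derivedFun, sigmaFun]

theorem DFun_mono : ∀ (i : List ℕ) (k : ℕ), Monotone (DFun i k)
  | [], _ => monotone_id
  | i1 :: i', k => by
    simp only [DFun]
    split_ifs
    · exact (deltaFun_mono _).comp ((sigmaFun_mono 0).comp (derivedFun_mono (DFun_mono i' k)))
    · exact derivedFun_mono (DFun_mono i' k)
    · exact (sigmaFun_mono 0).comp (derivedFun_mono (DFun_mono i' (k - 1)))

theorem DFun_of_length_le : ∀ {i : List ℕ}, IsAdmissible i → ∀ {k t : ℕ}, k ≤ i.length →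
    i.length ≤ t → DFun i k t = t - k
  | [], _, k, t, hk, _ => by
    obtain rfl : k = 0 := by simpa using hk
    rfl
  | i1 :: i', ⟨hi1, hi'⟩, k, t, hk, ht => by
    simp only [List.length_cons] at hk ht
    obtain ⟨t, rfl⟩ : ∃ t', t = t' + 1 := ⟨t - 1, by omega⟩
    rcases lt_trichotomy k i1 with h | rfl | h
    · rw [DFun_cons_succ_of_lt h, DFun_of_length_le hi' (by omega) (by omega), deltaFun,
        if_neg (by omega)]
      omega
    · rw [DFun_cons_succ_self, DFun_of_length_le hi' (by omega) (by omega)]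
      omega
    · rw [DFun_cons_succ_of_gt h, DFun_of_length_le hi' (by omega) (by omega)]
      omega

theorem DFun_mapsTo {i : List ℕ} (hi : IsAdmissible i) {k a b : ℕ} (hk : k ≤ i.length)
    (hn : i.length ≤ a + k) (hb : b ≤ a + k) :
    Set.MapsTo (DFun i k) (Set.Iic b) (Set.Iic a) := fun u (hu : u ≤ b) =>
  calc DFun i k u ≤ DFun i k (a + k) := DFun_mono i k (hu.trans hb)
    _ = a := by rw [DFun_of_length_le hi hk hn]; omega

end DFun

section Phi

variable {i1 p : ℕ} {i' : List ℕ}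

theorem Phi_cons_of_lt (h : p < i1) :
    Phi (i1 :: i') p = ((i1 - 1) :: (Phi i' p).1, (Phi i' p).2 + 1) := by
  simp [Phi, h]

theorem Phi_cons_self : Phi (p :: i') p = (i', 0) := by
  simp [Phi]

theorem Phi_cons_succ : Phi (i1 :: i') (i1 + 1) = (i', 0) := by
  simp [Phi]

theorem Phi_cons_of_gt (h : i1 + 1 < p) :
    Phi (i1 :: i') p = (i1 :: (Phi i' (p - 1)).1, (Phi i' (p - 1)).2 + 1) := by
  simp [Phi, show ¬p < i1 by omega, show p ≠ i1 by omega, h.ne']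

theorem length_Phi_fst : ∀ {i : List ℕ}, IsAdmissible i → ∀ {p : ℕ}, p ≤ i.length →
    (Phi i p).1.length = i.length - 1
  | [], _, _, _ => rfl
  | i1 :: i', ⟨hi1, hi'⟩, p, hp => by
    simp only [List.length_cons] at hp
    simp only [Phi]
    split_ifs
    · simp [length_Phi_fst hi' (by omega : p ≤ i'.length)]; omega
    · simp
    · simp [length_Phi_fst hi' (by omega : p - 1 ≤ i'.length)]; omega

theorem Phi_snd_le : ∀ {i : List ℕ}, IsAdmissible i → ∀ {p : ℕ}, p ≤ i.length →
    (Phi i p).2 ≤ i.length - 1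
  | [], _, _, _ => le_rfl
  | i1 :: i', ⟨hi1, hi'⟩, p, hp => by
    simp only [List.length_cons] at hp
    simp only [Phi]
    split_ifs
    · have := Phi_snd_le hi' (by omega : p ≤ i'.length); simp only [List.length_cons]; omega
    · simp
    · have := Phi_snd_le hi' (by omega : p - 1 ≤ i'.length); simp only [List.length_cons]; omega

theorem isAdmissible_Phi_fst : ∀ {i : List ℕ}, IsAdmissible i → ∀ {p : ℕ}, p ≤ i.length →
    IsAdmissible (Phi i p).1
  | [], _, _, _ => trivial
  | i1 :: i', ⟨hi1, hi'⟩, p, hp => by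
    simp only [List.length_cons] at hp
    simp only [Phi]
    split_ifs
    · exact ⟨by rw [length_Phi_fst hi' (by omega)]; omega, isAdmissible_Phi_fst hi' (by omega)⟩
    · exact hi'
    · exact ⟨by rw [length_Phi_fst hi' (by omega)]; omega, isAdmissible_Phi_fst hi' (by omega)⟩

end Phi

theorem sigmaFun_DFun_eq_DFun_Phi_sigmaFun : ∀ {i : List ℕ}, IsAdmissible i → ∀ {p k : ℕ},
    p ≤ i.length → k < p → ∀ t : ℕ,
    sigmaFun (p - 1 - k) (DFun i k t) = DFun (Phi i p).1 k (sigmaFun (Phi i p).2 t)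
  | [], _, _, _, hp, hk, _ => by simp only [List.length_nil] at hp; omega
  | _ :: _, _, _, _, _, _, 0 => by rw [DFun_zero, sigmaFun_zero, sigmaFun_zero, DFun_zero]
  | i1 :: i', ⟨hi1, hi'⟩, p, k, hp, hk, t + 1 => by
    simp only [List.length_cons] at hp
    rcases lt_trichotomy p i1 with hpi | rfl | hpi
    · rw [Phi_cons_of_lt hpi, sigmaFun_succ_succ, DFun_cons_succ_of_lt (by omega),
        DFun_cons_succ_of_lt (by omega : k < i1 - 1),
        ← sigmaFun_DFun_eq_DFun_Phi_sigmaFun hi' (by omega) hk t,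
        show i1 - k = i1 - 1 - k + 1 by omega, sigmaFun_deltaFun_of_lt (by omega)]
    · rw [Phi_cons_self, sigmaFun_zero_succ, DFun_cons_succ_of_lt hk,
        show p - k = p - 1 - k + 1 by omega, sigmaFun_deltaFun_succ]
    obtain rfl | hpi := (Nat.succ_le_of_lt hpi).eq_or_lt
    · rw [Phi_cons_succ, sigmaFun_zero_succ]
      obtain hki | rfl := (Nat.le_of_lt_succ hk).lt_or_eq
      · rw [DFun_cons_succ_of_lt hki, show i1 + 1 - 1 - k = i1 - k by omega,
          sigmaFun_deltaFun_self]
      · rw [DFun_cons_succ_self, show k + 1 - 1 - k = 0 by omega, sigmaFun_zero_succ]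
    rw [Phi_cons_of_gt hpi, sigmaFun_succ_succ]
    rcases lt_trichotomy k i1 with hki | rfl | hki
    · rw [DFun_cons_succ_of_lt hki, DFun_cons_succ_of_lt hki,
        ← sigmaFun_DFun_eq_DFun_Phi_sigmaFun hi' (by omega) (by omega) t,
        show p - 1 - k = p - 1 - 1 - k + 1 by omega, sigmaFun_deltaFun_of_le (by omega)]
    · rw [DFun_cons_succ_self, DFun_cons_succ_self,
        ← sigmaFun_DFun_eq_DFun_Phi_sigmaFun hi' (by omega) (by omega) t,
        show p - 1 - k = p - 1 - 1 - k + 1 by omega, sigmaFun_succ_succ]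
    · rw [DFun_cons_succ_of_gt hki, DFun_cons_succ_of_gt hki,
        ← sigmaFun_DFun_eq_DFun_Phi_sigmaFun hi' (by omega) (by omega) t,
        show p - 1 - 1 - (k - 1) = p - 1 - k by omega]

section SimplicialOperators

variable {a b c : ℕ} {f g : ℕ → ℕ}

theorem mkHomF_apply (hf : Monotone f) (hfa : Set.MapsTo f (Set.Iic b) (Set.Iic a))
    (t : Fin (b + 1)) : ((mkHomF a b f).toOrderHom t : ℕ) = f t := by
  have hsup : (Finset.range (t.1 + 1)).sup f = f t :=
    le_antisymm (Finset.sup_le fun u hu => hf (by simpa [Nat.lt_succ_iff] using hu))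
      (Finset.le_sup (Finset.self_mem_range_succ _))
  show min ((Finset.range (t.1 + 1)).sup f) a = f t
  rw [hsup, min_eq_left (hfa (Nat.lt_succ_iff.mp t.isLt))]

theorem mkHomF_comp (hf : Monotone f) (hfa : Set.MapsTo f (Set.Iic b) (Set.Iic a))
    (hg : Monotone g) (hgb : Set.MapsTo g (Set.Iic c) (Set.Iic b)) :
    mkHomF b c g ≫ mkHomF a b f = mkHomF a c (f ∘ g) := by
  ext t
  simp only [SimplexCategory.comp_toOrderHom, OrderHom.comp_coe, Function.comp_apply]
  rw [mkHomF_apply (hf.comp hg) (hfa.comp hgb), mkHomF_apply hf hfa, mkHomF_apply hg hgb]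
  rfl

theorem simpOp_simpOp (X : SSet) (hf : Monotone f) (hfa : Set.MapsTo f (Set.Iic b) (Set.Iic a))
    (hg : Monotone g) (hgb : Set.MapsTo g (Set.Iic c) (Set.Iic b))
    (x : X.obj (Opposite.op (SimplexCategory.mk a))) :
    simpOp X g b c (simpOp X f a b x) = simpOp X (f ∘ g) a c x := by
  rw [simpOp, simpOp, simpOp, ← mkHomF_comp hf hfa hg hgb, op_comp, Functor.map_comp]
  rfl

end SimplicialOperators

open Simplicial

theorem szczarba_D_degeneracy_low_general (n : ℕ) (i : List ℕ) (hi : memS n n i)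
    (p : ℕ) (hp : p ≤ n) (k : ℕ) (hk : k < p)
    (X : SSet) (m : ℕ) (hm : n - k - 1 ≤ m) (x : X _⦋m⦌) :
    simpOp X (DFun i k) (m + 1) (m + k + 1)
        (simpOp X (sigmaFun (p - 1 - k)) m (m + 1) x)
      = simpOp X (sigmaFun (Phi i p).2) (m + k) (m + k + 1)
          (simpOp X (DFun (Phi i p).1 k) m (m + k) x) := by
  have hadm := isAdmissible_of_memS hi
  obtain ⟨rfl, -⟩ := hi
  have hj := length_Phi_fst hadm hp
  rw [simpOp_simpOp X (sigmaFun_mono _) (sigmaFun_mapsTo (by omega)) (DFun_mono i k)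
      (DFun_mapsTo hadm (by omega) (by omega) (by omega)),
    simpOp_simpOp X (DFun_mono _ k)
      (DFun_mapsTo (isAdmissible_Phi_fst hadm hp) (by omega) (by omega) (by omega))
      (sigmaFun_mono _) (sigmaFun_mapsTo ((Phi_snd_le hadm hp).trans (by omega)))]
  exact congrArg (simpOp X · m (m + k + 1) x)
    (funext (sigmaFun_DFun_eq_DFun_Phi_sigmaFun hadm hp hk))

/-- For `n ≥ 1`, `i ∈ S_n`, `p ∈ {0, …, n}`,
`(j, q) = Φ(i, p)`, `0 ≤ k < p`, any simplicial set `X` and any simplex `x` of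
dimension `m ≥ n - k - 1`:  `D_i^k (s_{p-1-k} x) = s_q (D_j^k x)`. -/
theorem szczarba_D_degeneracy_low (n : ℕ) (hn : 1 ≤ n) (i : List ℕ) (hi : memS n n i)
    (p : ℕ) (hp : p ≤ n) (k : ℕ) (hk : k < p)
    (X : SSet) (m : ℕ) (hm : n - k - 1 ≤ m) (x : X _⦋m⦌) :
    simpOp X (DFun i k) (m + 1) (m + k + 1)
        (simpOp X (sigmaFun (p - 1 - k)) m (m + 1) x)
      = simpOp X (sigmaFun (Phi i p).2) (m + k) (m + k + 1)
          (simpOp X (DFun (Phi i p).1 k) m (m + k) x) :=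
  szczarba_D_degeneracy_low_general n i hi p hp k hk X m hm x
end
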